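/- arXiv:1007.1791 — 8 statements merged into one kernel-verified Lean document; each statement's English description precedes it below -/
import Mathlib

section
/- For all integers n ≥ 1, m ≥ 1 and every integer i, the number of tuples (λ_0, …, λ_{n−1}) of nonnegative integers with λ_0 + ⋯ + λ_{n−1} = m and Σ_{j=0}^{n−1} j·λ_j ≡ i (mod n) equals the number of tuples (μ_0, …, μ_{m−1}) of nonnegative integers with μ_0 + ⋯ + μ_{m−1} = n and Σ_{j=0}^{m−1} j·μ_j ≡ i (mod m) (Fredman's reciprocity). -/
/-!
Encode a tuple `(λ_0, …, λ_{a-1})` with sum `b` by the binary word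
`0^{λ_0} 1 0^{λ_1} 1 ⋯ 0^{λ_{a-1}} 1` of length `N + 1 = a + b`, i.e. by the set of positions of its
ones: an `a`-subset of `Fin (N + 1)` containing the last position, whose position sum `weight` is
`Σ_t t + a b - Σ_j j λ_j`. Passing to complements on the `m`-side, both sides of the theorem count
`n`-subsets `s` of `Fin (N + 1)` subject to a congruence on `weight s`: the left side those
containing the last position, the right side those avoiding it.

Summing over all rotations of every `s` multiplies both counts by `N + 1`. Rotating `s` so that `p`
comes last changes `weight s` modulo `n` by `-m` times the number of elements of `s` above `p`, and
modulo `m` by `n` times the number of non-elements above `p`; as `p` runs through `s` (resp. its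
complement) these numbers run through `0, …, n - 1` (resp. `0, …, m - 1`). So the rotations of a
fixed `s` contribute `#{t < n | n ∣ c - m t}` to the left side and `#{u < m | m ∣ c' + n u}` to the
right side. These counts are symmetric in `(n, m)`, and reversing `s` turns `c'` into `-c`.
-/

open Finset Pointwise

namespace Fredman

section Rank

variable {α : Type*} [LinearOrder α]

def rankAbove (t : Finset α) (p : α) : ℕ := #{x ∈ t | p < x}

lemma rankAbove_lt {t : Finset α} {p : α} (hp : p ∈ t) : rankAbove t p < #t :=
  card_lt_card <| filter_ssubset.2 ⟨p, hp, lt_irrefl p⟩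

lemma rankAbove_strictAntiOn (t : Finset α) : StrictAntiOn (rankAbove t) t := by
  intro p _ q hq hpq
  refine card_lt_card <| (ssubset_iff_of_subset ?_).2 ⟨q, mem_filter.2 ⟨hq, hpq⟩, by simp⟩
  exact monotone_filter_right t fun x _ hx => hpq.trans hx

lemma image_rankAbove (t : Finset α) : t.image (rankAbove t) = range #t := by
  refine eq_of_subset_of_card_le (fun r hr => ?_) ?_
  · obtain ⟨p, hp, rfl⟩ := mem_image.1 hr
    exact mem_range.2 (rankAbove_lt hp)
  · rw [card_range, card_image_of_injOn (rankAbove_strictAntiOn t).injOn]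

theorem card_filter_rankAbove (t : Finset α) (Q : ℕ → Prop) [DecidablePred Q] :
    #{p ∈ t | Q (rankAbove t p)} = #{r ∈ range #t | Q r} := by
  rw [← image_rankAbove, filter_image, card_image_of_injOn]
  exact (rankAbove_strictAntiOn t).injOn.mono (filter_subset _ _)

end Rank

theorem card_mul_card_filter_eq_sum_card_vadd {G : Type*} [AddGroup G] [Fintype G]
    [DecidableEq G] (n : ℕ) (P : Finset G → Prop) [DecidablePred P] :
    Fintype.card G * #{s : Finset G | #s = n ∧ P s} =
      ∑ s : Finset G with #s = n, #{g : G | P (g +ᵥ s)} := by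
  have htranslate (g : G) :
      #{s : Finset G | #s = n ∧ P (g +ᵥ s)} = #{s : Finset G | #s = n ∧ P s} :=
    card_equiv (AddAction.toPerm g) fun s => by simp
  calc Fintype.card G * #{s : Finset G | #s = n ∧ P s}
      = ∑ g : G, #{s : Finset G | #s = n ∧ P (g +ᵥ s)} := by simp [htranslate]
    _ = ∑ g : G, ∑ s : Finset G with #s = n, if P (g +ᵥ s) then 1 else 0 := by
      simp_rw [← filter_filter, card_filter]
    _ = ∑ s : Finset G with #s = n, #{g : G | P (g +ᵥ s)} := by
      rw [sum_comm]; simp_rw [card_filter]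

section Reciprocity

variable {n m : ℕ} {c : ℤ} {t : ℕ}

/-- For `n ∣ c - m t`, the unique `u < m` with `n * m ∣ c - m t - n u`. -/
def partner (n m : ℕ) (c : ℤ) (t : ℕ) : ℕ := ((c - m * t) / n % m).toNat

lemma sub_mul_partner (hm : 0 < m) (h : (n : ℤ) ∣ c - m * t) :
    c - n * partner n m c t = m * (t + n * ((c - m * t) / n / m)) := by
  have hv := Int.mul_ediv_cancel' h
  rw [partner, Int.toNat_of_nonneg (Int.emod_nonneg _ (by omega)), Int.emod_def]
  linear_combination -hv

lemma partner_lt (hm : 0 < m) : partner n m c t < m := by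
  have := Int.emod_lt_of_pos ((c - m * t) / n) (by omega : (0 : ℤ) < m)
  rw [partner]; omega

lemma dvd_sub_mul_partner (hm : 0 < m) (h : (n : ℤ) ∣ c - m * t) :
    (m : ℤ) ∣ c - n * partner n m c t :=
  ⟨_, sub_mul_partner hm h⟩

lemma partner_partner (hm : 0 < m) (ht : t < n) (h : (n : ℤ) ∣ c - m * t) :
    partner m n c (partner n m c t) = t := by
  rw [partner, sub_mul_partner hm h, Int.mul_ediv_cancel_left _ (by omega),
    Int.add_mul_emod_self_left, Int.emod_eq_of_lt (by omega) (by omega)]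
  simp

theorem card_filter_dvd_sub_mul_comm (hn : 0 < n) (hm : 0 < m) :
    #{t ∈ range n | (n : ℤ) ∣ c - m * (t : ℕ)} = #{u ∈ range m | (m : ℤ) ∣ c - n * (u : ℕ)} := by
  refine card_nbij' (partner n m c) (partner m n c) ?_ ?_ ?_ ?_ <;> intro t ht <;>
    simp only [coe_filter, mem_range, Set.mem_ofPred_eq] at ht ⊢
  · exact ⟨partner_lt hm, dvd_sub_mul_partner hm ht.2⟩
  · exact ⟨partner_lt hn, dvd_sub_mul_partner hn ht.2⟩
  · exact partner_partner hm ht.1 ht.2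
  · exact partner_partner hn ht.1 ht.2

end Reciprocity

section Weight

variable {N : ℕ}

def weight {k : ℕ} (s : Finset (Fin k)) : ℤ := ∑ x ∈ s, ((x : ℕ) : ℤ)

lemma two_mul_weight_univ (k : ℕ) : 2 * weight (univ : Finset (Fin k)) = k * (k - 1) := by
  rw [weight, Fin.sum_univ_eq_sum_range (fun i => (i : ℤ)) k]
  induction k with
  | zero => simp
  | succ k ih => rw [sum_range_succ, mul_add, ih]; push_cast; ring

lemma weight_compl (s : Finset (Fin (N + 1))) :
    weight sᶜ = weight (univ : Finset (Fin (N + 1))) - weight s := by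
  rw [weight, weight, weight, ← sum_compl_add_sum s]; ring

lemma weight_map_rev (s : Finset (Fin (N + 1))) :
    weight (Fin.revPerm.finsetCongr s) = #s * N - weight s := by
  rw [Equiv.finsetCongr_apply, weight, sum_map, weight, ← nsmul_eq_mul, ← sum_const,
    ← sum_sub_distrib]
  refine sum_congr rfl fun x _ => ?_
  simp only [Equiv.coe_toEmbedding, Fin.revPerm_apply, Fin.val_rev]
  omega

end Weight

section Encoding

variable {a b N : ℕ}

def cumPos (l : Fin a → ℕ) (t : Fin a) : ℕ := t + ∑ j ∈ Iic t, l j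

/-- The positions of the ones in the word `0^{l_0} 1 0^{l_1} 1 ⋯ 0^{l_{a-1}} 1`; `Fin.ofNat` does
not wrap around as long as `a + ∑ j, l j ≤ N + 1`. -/
def ones (N : ℕ) (l : Fin a → ℕ) : Finset (Fin (N + 1)) :=
  univ.image fun t => Fin.ofNat (N + 1) (cumPos l t)

lemma cumPos_strictMono (l : Fin a → ℕ) : StrictMono (cumPos l) := fun _ _ h =>
  add_lt_add_of_lt_of_le h (sum_le_sum_of_subset (Iic_subset_Iic.2 h.le))

lemma cumPos_injective : Function.Injective (cumPos : (Fin a → ℕ) → Fin a → ℕ) := by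
  intro l l' h
  funext t
  induction t using WellFoundedLT.induction with
  | _ t ih =>
    have hlower : ∑ j ∈ Iio t, l j = ∑ j ∈ Iio t, l' j :=
      sum_congr rfl fun j hj => ih j (mem_Iio.1 hj)
    simpa only [cumPos, ← Iio_insert, sum_insert notMem_Iio_self, hlower, add_left_cancel_iff,
      add_right_cancel_iff] using congrFun h t

lemma cumPos_le (hN : a + b = N + 1) {l : Fin a → ℕ} (hl : ∑ j, l j = b) (t : Fin a) :
    cumPos l t ≤ N := by
  have := sum_le_sum_of_subset (f := l) (subset_univ (Iic t))
  have := t.isLt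
  rw [cumPos]; omega

lemma sum_cumPos {l : Fin a → ℕ} (hl : ∑ j, l j = b) :
    ∑ t, (cumPos l t : ℤ) =
      weight (univ : Finset (Fin a)) + a * b - ∑ j : Fin a, (j : ℤ) * (l j : ℤ) := by
  have hswap : ∑ t : Fin a, ∑ j ∈ Iic t, (l j : ℤ) = ∑ j : Fin a, ∑ t ∈ Ici j, (l j : ℤ) :=
    sum_comm' fun t j => by simp
  simp only [cumPos, Nat.cast_add, Nat.cast_sum, sum_add_distrib, hswap, sum_const, Fin.card_Ici,
    nsmul_eq_mul, weight]
  have hl' : ∑ j, (l j : ℤ) = b := by exact_mod_cast hl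
  rw [← hl', mul_sum, add_sub_assoc, ← sum_sub_distrib]
  congr 1
  refine sum_congr rfl fun j _ => ?_
  rw [Nat.cast_sub j.isLt.le]; ring

lemma val_ofNat_cumPos (hN : a + b = N + 1) {l : Fin a → ℕ} (hl : ∑ j, l j = b) (t : Fin a) :
    (Fin.ofNat (N + 1) (cumPos l t) : ℕ) = cumPos l t :=
  Nat.mod_eq_of_lt (Nat.lt_succ_of_le (cumPos_le hN hl t))

lemma ofNat_cumPos_strictMono (hN : a + b = N + 1) {l : Fin a → ℕ} (hl : ∑ j, l j = b) :
    StrictMono fun t => Fin.ofNat (N + 1) (cumPos l t) := fun t t' h => by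
  rw [Fin.lt_def, val_ofNat_cumPos hN hl, val_ofNat_cumPos hN hl]
  exact cumPos_strictMono l h

lemma card_ones (hN : a + b = N + 1) {l : Fin a → ℕ} (hl : ∑ j, l j = b) :
    #(ones N l) = a := by
  rw [ones, card_image_of_injective _ (ofNat_cumPos_strictMono hN hl).injective, card_univ,
    Fintype.card_fin]

lemma last_mem_ones (ha : 0 < a) (hN : a + b = N + 1) {l : Fin a → ℕ} (hl : ∑ j, l j = b) :
    Fin.last N ∈ ones N l := by
  refine mem_image.2 ⟨⟨a - 1, by omega⟩, mem_univ _, Fin.ext ?_⟩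
  have hall : Iic (⟨a - 1, by omega⟩ : Fin a) = univ := by
    ext j; simp only [mem_Iic, Fin.le_def, mem_univ, iff_true]; omega
  rw [val_ofNat_cumPos hN hl, cumPos, hall, hl, Fin.val_last, Fin.val_mk]
  omega

lemma weight_ones (hN : a + b = N + 1) {l : Fin a → ℕ} (hl : ∑ j, l j = b) :
    weight (ones N l) =
      weight (univ : Finset (Fin a)) + a * b - ∑ j : Fin a, (j : ℤ) * (l j : ℤ) := by
  rw [ones, weight, sum_image fun t _ t' _ h => (ofNat_cumPos_strictMono hN hl).injective h,
    ← sum_cumPos hl]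
  simp only [val_ofNat_cumPos hN hl]

lemma ones_injective (hN : a + b = N + 1) {l l' : Fin a → ℕ} (hl : ∑ j, l j = b)
    (hl' : ∑ j, l' j = b) (h : ones N l = ones N l') : l = l' := by
  have hrange := congrArg ((↑) : Finset (Fin (N + 1)) → Set (Fin (N + 1))) h
  simp only [ones, coe_image, coe_univ, Set.image_univ] at hrange
  have := ((ofNat_cumPos_strictMono hN hl).range_inj (ofNat_cumPos_strictMono hN hl')).1 hrange
  refine cumPos_injective (funext fun t => ?_)
  rw [← val_ofNat_cumPos hN hl, ← val_ofNat_cumPos hN hl', congrFun this t]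

lemma natCard_fun_sum_eq : Nat.card {l : Fin a → ℕ // ∑ j, l j = b} = (a + b - 1).choose b := by
  rw [← Nat.card_congr (Sym.equivNatSumOfFintype (Fin a) b), Sym.natCard_sym_eq_choose,
    Nat.card_fin]

lemma natCard_last_mem (ha : 0 < a) :
    Nat.card {s : Finset (Fin (N + 1)) // #s = a ∧ Fin.last N ∈ s} = N.choose (a - 1) := by
  rw [Nat.card_eq_fintype_card, Fintype.card_subtype]
  calc _ = #(powersetCard (a - 1) ((univ : Finset (Fin (N + 1))).erase (Fin.last N))) := ?_
    _ = N.choose (a - 1) := by simp [card_powersetCard]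
  refine card_nbij' (fun s => s.erase (Fin.last N)) (insert (Fin.last N)) ?_ ?_ ?_ ?_ <;>
    intro s hs <;> simp only [mem_coe, mem_filter, mem_powersetCard, mem_univ, true_and] at hs ⊢
  · exact ⟨erase_subset_erase _ (subset_univ s), by rw [card_erase_of_mem hs.2, hs.1]⟩
  · have hlast : Fin.last N ∉ s := fun h => by simpa using hs.1 h
    exact ⟨by rw [card_insert_of_notMem hlast, hs.2]; omega, mem_insert_self _ _⟩
  · exact insert_erase hs.2
  · exact erase_insert fun h => by simpa using hs.1 h

theorem natCard_modEq_eq_card_last_mem (ha : 0 < a) (hN : a + b = N + 1) (γ : ℤ) :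
    Nat.card {l : Fin a → ℕ //
      (∑ j, l j) = b ∧ (∑ j : Fin a, (j : ℤ) * (l j : ℤ)) ≡ γ [ZMOD (a : ℤ)]} =
      #{s : Finset (Fin (N + 1)) | #s = a ∧ Fin.last N ∈ s ∧
        (a : ℤ) ∣ weight s - (weight (univ : Finset (Fin a)) - γ)} := by
  let encode (l : {l : Fin a → ℕ // ∑ j, l j = b}) :
      {s : Finset (Fin (N + 1)) // #s = a ∧ Fin.last N ∈ s} :=
    ⟨ones N l, card_ones hN l.2, last_mem_ones ha hN l.2⟩
  have hencode : Function.Bijective encode := by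
    refine Function.Injective.bijective_of_nat_card_le
      (fun l l' h => Subtype.ext (ones_injective hN l.2 l'.2 (congrArg Subtype.val h))) ?_
    rw [natCard_fun_sum_eq, natCard_last_mem ha, show a + b - 1 = N by omega,
      Nat.choose_symm_of_eq_add (show N = a - 1 + b by omega)]
  have hcond (l : {l : Fin a → ℕ // ∑ j, l j = b}) :
      (∑ j : Fin a, (j : ℤ) * (l.1 j : ℤ)) ≡ γ [ZMOD (a : ℤ)] ↔
        (a : ℤ) ∣ weight (encode l).1 - (weight (univ : Finset (Fin a)) - γ) := by
    rw [Int.modEq_iff_dvd, weight_ones hN l.2, ← dvd_add_right (dvd_mul_right (a : ℤ) b)]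
    exact iff_of_eq (congrArg _ (by ring))
  calc _ = Nat.card {l : {l : Fin a → ℕ // ∑ j, l j = b} //
          (∑ j : Fin a, (j : ℤ) * (l.1 j : ℤ)) ≡ γ [ZMOD (a : ℤ)]} :=
        Nat.card_congr (Equiv.subtypeSubtypeEquivSubtypeInter _ _).symm
    _ = Nat.card {s : {s : Finset (Fin (N + 1)) // #s = a ∧ Fin.last N ∈ s} //
          (a : ℤ) ∣ weight s.1 - (weight (univ : Finset (Fin a)) - γ)} :=
        Nat.card_congr ((Equiv.ofBijective encode hencode).subtypeEquiv hcond)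
    _ = Nat.card {s : Finset (Fin (N + 1)) // (#s = a ∧ Fin.last N ∈ s) ∧
          (a : ℤ) ∣ weight s - (weight (univ : Finset (Fin a)) - γ)} :=
        Nat.card_congr (Equiv.subtypeSubtypeEquivSubtypeInter
          (fun s : Finset (Fin (N + 1)) => #s = a ∧ Fin.last N ∈ s)
          (fun s => (a : ℤ) ∣ weight s - (weight (univ : Finset (Fin a)) - γ)))
    _ = _ := by
      rw [Nat.card_eq_fintype_card, Fintype.card_subtype]
      simp only [and_assoc]

end Encoding

section Rotation

variable {N n m : ℕ}

lemma val_add_rev (x p : Fin (N + 1)) :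
    (((x + p.rev : Fin (N + 1)) : ℕ) : ℤ) = x + (N - p) - (N + 1) * if p < x then 1 else 0 := by
  rw [Fin.val_add, Fin.val_rev]
  have := x.isLt; have := p.isLt
  split_ifs with h
  · rw [Fin.lt_def] at h
    rw [Nat.mod_eq_sub_mod (by omega), Nat.mod_eq_of_lt (by omega)]; omega
  · rw [Fin.lt_def] at h
    rw [Nat.mod_eq_of_lt (by omega)]; omega

/-- Rotating by `p.rev` moves `p` to the last position; the elements above `p` wrap around. -/
lemma weight_rev_vadd (p : Fin (N + 1)) (s : Finset (Fin (N + 1))) :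
    weight (p.rev +ᵥ s) = weight s + #s * (N - p) - (N + 1) * rankAbove s p := by
  rw [weight, vadd_finset_def, sum_image fun x _ y _ h => by simpa using h]
  simp only [vadd_eq_add, add_comm p.rev, val_add_rev, sum_sub_distrib, sum_add_distrib,
    ← mul_sum, sum_boole, rankAbove, sum_const, nsmul_eq_mul, weight]
  ring

lemma last_mem_rev_vadd (p : Fin (N + 1)) (s : Finset (Fin (N + 1))) :
    Fin.last N ∈ p.rev +ᵥ s ↔ p ∈ s := by
  rw [← vadd_mem_vadd_finset_iff (α := Fin (N + 1)) p.rev (b := p), vadd_eq_add, ← Fin.last_sub,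
    sub_add_cancel]

lemma rankAbove_add_rankAbove_compl (s : Finset (Fin (N + 1))) (p : Fin (N + 1)) :
    rankAbove s p + rankAbove sᶜ p = N - p := by
  rw [rankAbove, rankAbove, show N - (p : ℕ) = N + 1 - 1 - p by omega, ← Fin.card_Ioi,
    ← card_filter_add_card_filter_not (s := Ioi p) (· ∈ s)]
  congr 2 <;> ext x <;> simp [and_comm]

lemma card_rotations_last_mem (hN : N + 1 = n + m) {s : Finset (Fin (N + 1))} (hs : #s = n)
    (α : ℤ) :
    #{k : Fin (N + 1) | Fin.last N ∈ k +ᵥ s ∧ (n : ℤ) ∣ weight (k +ᵥ s) - α} =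
      #{r ∈ range n | (n : ℤ) ∣ weight s - α - m * (r : ℕ)} := by
  have hdvd (p : Fin (N + 1)) : (n : ℤ) ∣ weight (p.rev +ᵥ s) - α ↔
      (n : ℤ) ∣ weight s - α - m * rankAbove s p := by
    have hw : weight (p.rev +ᵥ s) - α =
        weight s - α - m * rankAbove s p + n * (N - p - rankAbove s p) := by
      rw [weight_rev_vadd, hs, show (N : ℤ) + 1 = n + m by exact_mod_cast hN]; ring
    rw [hw, dvd_add_left (dvd_mul_right _ _)]
  calc _ = #{p ∈ s | (n : ℤ) ∣ weight (p.rev +ᵥ s) - α} :=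
        (card_equiv Fin.revPerm fun p => by simp [last_mem_rev_vadd]).symm
    _ = _ := by
      simp_rw [hdvd]
      exact (card_filter_rankAbove s fun r => (n : ℤ) ∣ weight s - α - m * r).trans (by rw [hs])

lemma card_rotations_last_not_mem (hN : N + 1 = n + m) {s : Finset (Fin (N + 1))}
    (hs : #s = n) (β : ℤ) :
    #{k : Fin (N + 1) | Fin.last N ∉ k +ᵥ s ∧ (m : ℤ) ∣ weight (k +ᵥ s) - β} =
      #{r ∈ range m | (m : ℤ) ∣ weight s - β + n * (r : ℕ)} := by
  have hdvd (p : Fin (N + 1)) : (m : ℤ) ∣ weight (p.rev +ᵥ s) - β ↔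
      (m : ℤ) ∣ weight s - β + n * rankAbove sᶜ p := by
    have hsplit := rankAbove_add_rankAbove_compl s p
    have hw : weight (p.rev +ᵥ s) - β =
        weight s - β + n * rankAbove sᶜ p - m * rankAbove s p := by
      rw [weight_rev_vadd, hs, show (N : ℤ) + 1 = n + m by exact_mod_cast hN,
        show (N : ℤ) - p = rankAbove s p + rankAbove sᶜ p by omega]; ring
    rw [hw, dvd_sub_left (dvd_mul_right _ _)]
  have hcompl : #sᶜ = m := by rw [card_compl, hs, Fintype.card_fin]; omega
  calc _ = #{p ∈ sᶜ | (m : ℤ) ∣ weight (p.rev +ᵥ s) - β} :=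
        (card_equiv Fin.revPerm fun p => by simp [last_mem_rev_vadd]).symm
    _ = _ := by
      simp_rw [hdvd]
      exact (card_filter_rankAbove sᶜ fun r => (m : ℤ) ∣ weight s - β + n * r).trans
        (by rw [hcompl])

lemma card_last_mem_eq_card_compl (hN : N + 1 = n + m) (d c : ℤ) :
    #{u : Finset (Fin (N + 1)) | #u = m ∧ Fin.last N ∈ u ∧ d ∣ weight u - c} =
      #{s : Finset (Fin (N + 1)) | #s = n ∧ Fin.last N ∉ s ∧
        d ∣ weight s - (weight (univ : Finset (Fin (N + 1))) - c)} := by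
  refine card_equiv (compl_involutive.toPerm _) fun u => ?_
  have hw : weight uᶜ - (weight (univ : Finset (Fin (N + 1))) - c) = -(weight u - c) := by
    rw [weight_compl]; ring
  have hcard : #u ≤ N + 1 := by simpa using card_le_univ u
  simp only [mem_filter, mem_univ, true_and, Function.Involutive.coe_toPerm, card_compl,
    Fintype.card_fin, mem_compl, not_not, hw, dvd_neg]
  exact and_congr_left' ⟨fun _ => by omega, fun _ => by omega⟩

theorem card_last_mem_eq_card_last_not_mem (hN : N + 1 = n + m) (hn : 0 < n) (hm : 0 < m)
    {α β : ℤ} (hαβ : α + β = n * N) :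
    #{s : Finset (Fin (N + 1)) | #s = n ∧ Fin.last N ∈ s ∧ (n : ℤ) ∣ weight s - α} =
      #{s : Finset (Fin (N + 1)) | #s = n ∧ Fin.last N ∉ s ∧ (m : ℤ) ∣ weight s - β} := by
  have hcount := card_mul_card_filter_eq_sum_card_vadd (G := Fin (N + 1)) n
  rw [Fintype.card_fin] at hcount
  refine Nat.eq_of_mul_eq_mul_left (by omega : 0 < N + 1) ?_
  rw [hcount, hcount]
  calc _ = ∑ s : Finset (Fin (N + 1)) with #s = n,
          #{r ∈ range m | (m : ℤ) ∣ weight s - α - n * (r : ℕ)} := by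
        refine sum_congr rfl fun s hs => ?_
        rw [card_rotations_last_mem hN (mem_filter.1 hs).2, card_filter_dvd_sub_mul_comm hn hm]
    _ = ∑ s : Finset (Fin (N + 1)) with #s = n,
          #{r ∈ range m | (m : ℤ) ∣ weight (Fin.revPerm.finsetCongr s) - β + n * (r : ℕ)} := by
        refine sum_congr rfl fun s hs => congrArg card <| filter_congr fun r _ => ?_
        rw [weight_map_rev, (mem_filter.1 hs).2, ← dvd_neg]
        exact iff_of_eq (congrArg _ (by linear_combination hαβ))
    _ = ∑ s : Finset (Fin (N + 1)) with #s = n,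
          #{r ∈ range m | (m : ℤ) ∣ weight s - β + n * (r : ℕ)} :=
        sum_equiv Fin.revPerm.finsetCongr (by simp [Equiv.finsetCongr_apply]) fun _ _ => rfl
    _ = _ := sum_congr rfl fun s hs => (card_rotations_last_not_mem hN (mem_filter.1 hs).2 β).symm

end Rotation

end Fredman

open Fredman in
/-- Fredman's reciprocity: for `n, m ≥ 1` and any integer `i`, the number of tuples
`(λ_0,…,λ_{n-1})` of nonnegative integers with `Σ λ_j = m` and `Σ j·λ_j ≡ i (mod n)`
equals the number of tuples `(μ_0,…,μ_{m-1})` of nonnegative integers with `Σ μ_j = n`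
and `Σ j·μ_j ≡ i (mod m)`. -/
theorem fredman_reciprocity (n m : ℕ) (hn : 1 ≤ n) (hm : 1 ≤ m) (i : ℤ) :
    Nat.card {l : Fin n → ℕ //
      (∑ j, l j) = m ∧ (∑ j : Fin n, (j : ℤ) * (l j : ℤ)) ≡ i [ZMOD (n : ℤ)]} =
    Nat.card {l : Fin m → ℕ //
      (∑ j, l j) = n ∧ (∑ j : Fin m, (j : ℤ) * (l j : ℤ)) ≡ i [ZMOD (m : ℤ)]} := by
  obtain ⟨N, hN⟩ : ∃ N, N + 1 = n + m := ⟨n + m - 1, by omega⟩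
  rw [natCard_modEq_eq_card_last_mem hn hN.symm,
    natCard_modEq_eq_card_last_mem hm (by omega : m + n = N + 1), card_last_mem_eq_card_compl hN]
  refine card_last_mem_eq_card_last_not_mem hN hn hm (mul_left_cancel₀ two_ne_zero ?_)
  have hN' : (N : ℤ) + 1 = n + m := by exact_mod_cast hN
  have hgauss := two_mul_weight_univ (N + 1)
  push_cast at hgauss
  linear_combination two_mul_weight_univ n + hgauss - two_mul_weight_univ m + (N - n + m) * hN'
end

section
/- Let p, q, m be nonnegative integers with q+m ≥ 1 and p+m ≥ 1, and let i be an integer. Then T_i(q+m, p, m) = T_i(p+m, q, m); that is, the number of pairs (λ, J) with λ a tuple of q+m nonnegative integers summing to p, J an m-element subset of {0, …, q+m−1}, and Σ_j j·λ_j + Σ_{j∈J} j ≡ i (mod q+m), equals the number of pairs (μ, K) with μ a tuple of p+m nonnegative integers summing to q, K an m-element subset of {0, …, p+m−1}, and Σ_j j·μ_j + Σ_{j∈K} j ≡ i (mod p+m). -/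
/-!
Encode a pair `(λ, J)` counted by `T_i(q+m, p, m)` as the word obtained by writing, for
`j = 0, …, q+m-1`, `λ_j` letters `dot` followed by `dotBar` if `j ∈ J` and by `bar` otherwise.
These are exactly the words with `p` dots, `q` bars and `m` dotBars whose last letter is not a
`dot`, and the weight `Σ j λ_j + Σ_{j ∈ J} j` becomes the number of crossings: pairs formed by a
bar-type letter (`bar`, `dotBar`) and a later dot-type letter (`dot`, `dotBar`).

Rotating a word so that it ends at its `t`-th bar-type letter lowers its crossing number by
`(p+m) t` modulo `q+m`. Counting pairs (word, rotation) in two ways therefore gives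
`(p+q+m) T_i(q+m, p, m) = Σ_w #{u ∈ ℤ/(q+m) | (p+m) u = crossings w - i}`
over all words with `p` dots, `q` bars and `m` dotBars. The number of solutions of `a u = s` in `ℤ/c` is symmetric in `a` and
`c`, and reversing a word while exchanging `dot` and `bar` preserves crossings and exchanges `p`
and `q`, so the right-hand side is symmetric in `p` and `q`.
-/

open Finset

namespace FredmanReciprocity

inductive Letter
  | dot
  | bar
  | dotBar
  deriving DecidableEq

namespace Letter

def swap : Letter → Letter
  | dot => bar
  | bar => dot
  | dotBar => dotBar

@[simp] lemma swap_swap (x : Letter) : x.swap.swap = x := by cases x <;> rfl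

lemma swap_injective : Function.Injective swap := Function.LeftInverse.injective swap_swap

lemma count_map_swap (x : Letter) (w : List Letter) : (w.map swap).count x = w.count x.swap := by
  rw [← List.count_map_of_injective w swap swap_injective, swap_swap]

def ofBool : Bool → Letter
  | false => bar
  | true => dotBar

lemma ofBool_ne_dot (b : Bool) : ofBool b ≠ dot := by cases b <;> simp [ofBool]

lemma ofBool_injective : Function.Injective ofBool := by
  intro b b' h; cases b <;> cases b' <;> simp_all [ofBool]

end Letter

open Letter

def numBars (w : List Letter) : ℕ := w.count bar + w.count dotBar

def numDots (w : List Letter) : ℕ := w.count dot + w.count dotBar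

def crossings : List Letter → ℕ
  | [] => 0
  | x :: w => (if x = dot then 0 else numDots w) + crossings w

lemma numBars_cons (x : Letter) (w : List Letter) :
    numBars (x :: w) = numBars w + if x = dot then 0 else 1 := by
  cases x <;> simp only [numBars, List.count_cons, beq_iff_eq, reduceCtorEq, if_true, if_false] <;>
    omega

lemma numDots_cons (x : Letter) (w : List Letter) :
    numDots (x :: w) = numDots w + if x = bar then 0 else 1 := by
  cases x <;> simp only [numDots, List.count_cons, beq_iff_eq, reduceCtorEq, if_true, if_false] <;>
    omega

@[simp] lemma numBars_append (u v : List Letter) : numBars (u ++ v) = numBars u + numBars v := by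
  simp only [numBars, List.count_append]; ring

@[simp] lemma numDots_append (u v : List Letter) : numDots (u ++ v) = numDots u + numDots v := by
  simp only [numDots, List.count_append]; ring

lemma crossings_append (u v : List Letter) :
    crossings (u ++ v) = crossings u + numBars u * numDots v + crossings v := by
  induction u with
  | nil => simp [crossings, numBars]
  | cons x u ih =>
    rw [List.cons_append, crossings, crossings, ih, numDots_append, numBars_cons]
    split_ifs <;> ring

lemma numBars_reverse_map_swap (w : List Letter) : numBars (w.reverse.map swap) = numDots w := by
  simp only [numBars, numDots, count_map_swap, List.count_reverse, swap]

lemma crossings_reverse_map_swap (w : List Letter) :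
    crossings (w.reverse.map swap) = crossings w := by
  induction w with
  | nil => rfl
  | cons x w ih =>
    rw [List.reverse_cons, List.map_append, crossings_append, ih, numBars_reverse_map_swap,
      crossings, List.map_singleton, numDots_cons]
    cases x <;> simp only [swap, crossings, numDots, List.count_nil, reduceCtorEq, if_true,
      if_false] <;> ring

def words (p q m : ℕ) : Finset (List Letter) :=
  (List.replicate p dot ++ List.replicate q bar ++ List.replicate m dotBar).permutations.toFinset

lemma mem_words {p q m : ℕ} {w : List Letter} :
    w ∈ words p q m ↔ w.count dot = p ∧ w.count bar = q ∧ w.count dotBar = m := by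
  rw [words, List.mem_toFinset, List.mem_permutations, List.perm_iff_count]
  refine ⟨fun h => ?_, fun ⟨hp, hq, hm⟩ x => ?_⟩
  · simp [h, List.count_replicate]
  · cases x <;> simp [hp, hq, hm, List.count_replicate]

lemma length_eq_count_add (w : List Letter) :
    w.length = w.count dot + w.count bar + w.count dotBar := by
  induction w with
  | nil => rfl
  | cons x w ih =>
    cases x <;> simp only [List.length_cons, List.count_cons, ih, beq_iff_eq, reduceCtorEq, if_true,
      if_false] <;> omega

section words

variable {p q m : ℕ} {w : List Letter}

lemma length_of_mem_words (hw : w ∈ words p q m) : w.length = p + q + m := by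
  obtain ⟨hp, hq, hm⟩ := mem_words.1 hw
  rw [length_eq_count_add, hp, hq, hm]

lemma numBars_of_mem_words (hw : w ∈ words p q m) : numBars w = q + m := by
  obtain ⟨-, hq, hm⟩ := mem_words.1 hw
  rw [numBars, hq, hm]

lemma numDots_of_mem_words (hw : w ∈ words p q m) : numDots w = p + m := by
  obtain ⟨hp, -, hm⟩ := mem_words.1 hw
  rw [numDots, hp, hm]

lemma rotate_mem_words (hw : w ∈ words p q m) (n : ℕ) : w.rotate n ∈ words p q m := by
  simpa only [mem_words, (List.rotate_perm w n).count_eq] using hw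

lemma reverse_map_swap_mem_words (hw : w ∈ words p q m) : w.reverse.map swap ∈ words q p m := by
  obtain ⟨hp, hq, hm⟩ := mem_words.1 hw
  simpa only [mem_words, count_map_swap, List.count_reverse, swap] using ⟨hq, hp, hm⟩

end words

lemma crossings_replicate_dot (k : ℕ) : crossings (List.replicate k dot) = 0 := by
  induction k with
  | zero => rfl
  | succ k ih => simp [List.replicate_succ, crossings, ih]

lemma numBars_replicate_dot (k : ℕ) : numBars (List.replicate k dot) = 0 := by
  simp [numBars, List.count_replicate]

def blocks {n : ℕ} (a : Fin n → ℕ) (b : Fin n → Bool) : List Letter :=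
  (List.ofFn fun j => List.replicate (a j) dot ++ [ofBool (b j)]).flatten

@[simp] lemma blocks_zero (a : Fin 0 → ℕ) (b : Fin 0 → Bool) : blocks a b = [] := by
  simp [blocks]

lemma blocks_succ {n : ℕ} (a : Fin (n + 1) → ℕ) (b : Fin (n + 1) → Bool) :
    blocks a b = List.replicate (a 0) dot ++ ofBool (b 0) :: blocks (Fin.tail a) (Fin.tail b) := by
  simp [blocks, List.ofFn_succ, Fin.tail]

section blocks

variable {n : ℕ} (a : Fin n → ℕ) (b : Fin n → Bool)

lemma count_dot_blocks : (blocks a b).count dot = ∑ j, a j := by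
  simp [blocks, List.count_flatten, List.sum_ofFn, ofBool_ne_dot]

lemma count_dotBar_blocks : (blocks a b).count dotBar = #{j | b j} := by
  simp only [blocks, List.count_flatten, List.map_ofFn, List.sum_ofFn, card_filter]
  exact sum_congr rfl fun j _ => by cases hb : b j <;> simp [hb, ofBool, List.count_replicate]

lemma numBars_blocks : numBars (blocks a b) = n := by
  simp only [numBars, blocks, List.count_flatten, List.map_ofFn, List.sum_ofFn, ← sum_add_distrib]
  trans ∑ _j : Fin n, 1
  · exact sum_congr rfl fun j _ => by cases hb : b j <;> simp [hb, ofBool, List.count_replicate]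
  · simp

lemma numDots_blocks : numDots (blocks a b) = ∑ j, (a j + (b j).toNat) := by
  simp only [numDots, blocks, List.count_flatten, List.map_ofFn, List.sum_ofFn, ← sum_add_distrib]
  exact sum_congr rfl fun j _ => by cases hb : b j <;> simp [hb, ofBool, List.count_replicate]

end blocks

lemma crossings_blocks {n : ℕ} (a : Fin n → ℕ) (b : Fin n → Bool) :
    crossings (blocks a b) = ∑ j : Fin n, (j : ℕ) * (a j + (b j).toNat) := by
  induction n with
  | zero => simp [crossings]
  | succ n ih =>
    rw [blocks_succ, crossings_append, crossings, ih, numDots_blocks, Fin.sum_univ_succ,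
      crossings_replicate_dot, numBars_replicate_dot, if_neg (ofBool_ne_dot _)]
    simp only [Fin.tail, Fin.val_zero, Fin.val_succ, zero_mul, zero_add, add_mul, one_mul,
      sum_add_distrib]
    ring

lemma replicate_dot_append_cons_inj {k k' : ℕ} {x x' : Letter} {u u' : List Letter}
    (hx : x ≠ dot) (hx' : x' ≠ dot)
    (h : List.replicate k dot ++ x :: u = List.replicate k' dot ++ x' :: u') :
    k = k' ∧ x = x' ∧ u = u' := by
  induction k generalizing k' with
  | zero =>
    cases k' with
    | zero => simpa using h
    | succ k' => exact absurd (List.cons_eq_cons.1 h).1 hx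
  | succ k ih =>
    cases k' with
    | zero => exact absurd (List.cons_eq_cons.1 h).1.symm hx'
    | succ k' =>
      obtain ⟨rfl, rfl, rfl⟩ := ih (List.cons_eq_cons.1 h).2
      exact ⟨rfl, rfl, rfl⟩

lemma blocks_injective {n : ℕ} {a a' : Fin n → ℕ} {b b' : Fin n → Bool}
    (h : blocks a b = blocks a' b') : a = a' ∧ b = b' := by
  induction n with
  | zero => exact ⟨Subsingleton.elim _ _, Subsingleton.elim _ _⟩
  | succ n ih =>
    rw [blocks_succ, blocks_succ] at h
    obtain ⟨ha0, hb0, htail⟩ :=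
      replicate_dot_append_cons_inj (ofBool_ne_dot _) (ofBool_ne_dot _) h
    obtain ⟨ha, hb⟩ := ih htail
    rw [← Fin.cons_self_tail a, ← Fin.cons_self_tail b, ← Fin.cons_self_tail a',
      ← Fin.cons_self_tail b', ha0, ofBool_injective hb0, ha, hb]
    exact ⟨rfl, rfl⟩

lemma getLast?_blocks_ne_dot {n : ℕ} (a : Fin n → ℕ) (b : Fin n → Bool) :
    (blocks a b).getLast? ≠ some dot := by
  induction n with
  | zero => simp
  | succ n ih =>
    rw [blocks_succ, List.getLast?_append, List.getLast?_cons]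
    specialize ih (Fin.tail a) (Fin.tail b)
    cases h : (blocks (Fin.tail a) (Fin.tail b)).getLast? <;> simp_all [ofBool_ne_dot]

lemma getLast?_ne_of_cons {x y : Letter} {w : List Letter} (h : (x :: w).getLast? ≠ some y) :
    w.getLast? ≠ some y := by
  cases w with
  | nil => simp
  | cons z w => rwa [List.getLast?_cons_cons] at h

lemma exists_blocks_eq {n : ℕ} {w : List Letter} (hn : numBars w = n)
    (hw : w.getLast? ≠ some dot) : ∃ (a : Fin n → ℕ) (b : Fin n → Bool), blocks a b = w := by
  induction w generalizing n with
  | nil =>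
    subst hn
    exact ⟨0, 0, blocks_zero _ _⟩
  | cons x w ih =>
    by_cases hx : x = dot
    · subst hx
      have hw' : w ≠ [] := by rintro rfl; simp at hw
      obtain ⟨a, b, rfl⟩ := ih (n := n) (by rwa [numBars_cons, if_pos rfl, add_zero] at hn)
        (getLast?_ne_of_cons hw)
      cases n with
      | zero => simp at hw'
      | succ n =>
        refine ⟨Fin.cons (a 0 + 1) (Fin.tail a), b, ?_⟩
        rw [blocks_succ, blocks_succ a]
        simp [List.replicate_succ]
    · obtain ⟨β, rfl⟩ : ∃ β, ofBool β = x := by cases x <;> simp_all [ofBool]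
      cases n with
      | zero => rw [numBars_cons, if_neg (ofBool_ne_dot β)] at hn; omega
      | succ n =>
        obtain ⟨a, b, rfl⟩ := ih (n := n)
          (by rw [numBars_cons, if_neg (ofBool_ne_dot β)] at hn; omega) (getLast?_ne_of_cons hw)
        refine ⟨Fin.cons 0 a, Fin.cons β b, ?_⟩
        rw [blocks_succ]
        simp

lemma natCast_crossings_blocks_mem {n : ℕ} (a : Fin n → ℕ) (J : Finset (Fin n)) :
    (crossings (blocks a (· ∈ J)) : ℤ) = ∑ j : Fin n, (j : ℤ) * a j + ∑ j ∈ J, (j : ℤ) := by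
  rw [crossings_blocks, ← sum_ite_mem_eq J, ← sum_add_distrib]
  push_cast
  refine sum_congr rfl fun j _ => ?_
  by_cases hj : j ∈ J <;> simp [hj, mul_add]

def closedWords (p q m : ℕ) (i : ℤ) : Finset (List Letter) :=
  (words p q m).filter fun w => w.getLast? ≠ some dot ∧ (crossings w : ZMod (q + m)) = i

lemma blocks_mem_closedWords_iff {p q m : ℕ} {i : ℤ} (a : Fin (q + m) → ℕ)
    (J : Finset (Fin (q + m))) :
    blocks a (· ∈ J) ∈ closedWords p q m i ↔ ∑ j, a j = p ∧ #J = m ∧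
      (∑ j : Fin (q + m), (j : ℤ) * a j + ∑ j ∈ J, (j : ℤ)) ≡ i [ZMOD ((q + m : ℕ) : ℤ)] := by
  have hbars := numBars_blocks a (· ∈ J)
  have hJ := count_dotBar_blocks a (· ∈ J)
  simp only [decide_eq_true_eq, filter_mem_eq_inter, univ_inter] at hJ
  rw [closedWords, mem_filter, mem_words, count_dot_blocks, ← ZMod.intCast_eq_intCast_iff,
    ← natCast_crossings_blocks_mem]
  simp only [getLast?_blocks_ne_dot, ne_eq, not_false_eq_true, true_and, hJ, Int.cast_natCast]
  rw [numBars, hJ] at hbars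
  constructor
  · rintro ⟨⟨hp, -, hm⟩, hi⟩
    exact ⟨hp, hm, hi⟩
  · rintro ⟨hp, hm, hi⟩
    exact ⟨⟨hp, by omega, hm⟩, hi⟩

lemma card_pairs_eq_card_closedWords (p q m : ℕ) (i : ℤ) :
    Nat.card {lJ : (Fin (q + m) → ℕ) × Finset (Fin (q + m)) //
      (∑ j, lJ.1 j) = p ∧ lJ.2.card = m ∧
      ((∑ j : Fin (q + m), (j : ℤ) * (lJ.1 j : ℤ)) + ∑ j ∈ lJ.2, (j : ℤ))
        ≡ i [ZMOD ((q + m : ℕ) : ℤ)]} = #(closedWords p q m i) := by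
  rw [← Nat.card_eq_finsetCard]
  refine Nat.card_congr (.ofBijective
    (fun x => ⟨blocks x.1.1 (· ∈ x.1.2), (blocks_mem_closedWords_iff _ _).2 x.2⟩) ⟨?_, ?_⟩)
  · intro ⟨⟨a, J⟩, _⟩ ⟨⟨a', J'⟩, _⟩ h
    obtain ⟨rfl, hJ⟩ := blocks_injective (Subtype.ext_iff.1 h)
    obtain rfl : J = J' := by ext j; simpa using congrFun hJ j
    rfl
  · rintro ⟨w, hw⟩
    obtain ⟨a, b, rfl⟩ := exists_blocks_eq (numBars_of_mem_words (mem_filter.1 hw).1)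
      (mem_filter.1 hw).2.1
    have hb : (fun j => decide (j ∈ univ.filter (b ·))) = b := by ext; simp
    refine ⟨⟨(a, univ.filter (b ·)), (blocks_mem_closedWords_iff _ _).1 ?_⟩, ?_⟩ <;> simp only [hb]
    exact hw

lemma crossings_rotate_add (w : List Letter) {n : ℕ} (hn : n ≤ w.length) :
    crossings (w.rotate n) + numDots w * numBars (w.take n) =
      crossings w + numBars w * numDots (w.take n) := by
  have hw := List.take_append_drop n w
  rw [List.rotate_eq_drop_append_take hn]
  set u := w.take n
  set d := w.drop n
  rw [← hw, crossings_append, crossings_append, numBars_append, numDots_append]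
  ring

lemma getLast?_rotate_succ (w : List Letter) {k : ℕ} (hk : k < w.length) :
    (w.rotate (k + 1)).getLast? = w[k]? := by
  rw [List.rotate_eq_drop_append_take hk, List.getLast?_append, List.getLast?_take]
  simp [List.getElem?_eq_getElem hk]

lemma card_filter_bar_positions (w : List Letter) (Q : ℕ → Prop) [DecidablePred Q] :
    #{k ∈ range w.length | w[k]? ≠ some dot ∧ Q (numBars (w.take (k + 1)))} =
      #{t ∈ range (numBars w) | Q (t + 1)} := by
  induction w generalizing Q with
  | nil => simp [numBars]
  | cons x w ih =>
    rw [card_filter, List.length_cons, sum_range_succ']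
    simp only [List.getElem?_cons_succ, List.take_succ_cons, numBars_cons]
    by_cases hx : x = dot
    · subst hx
      simpa [← card_filter] using ih Q
    · simp only [hx, if_false, ← card_filter, ih (fun t => Q (t + 1))]
      rw [card_filter, card_filter, sum_range_succ' _ (numBars w)]
      simp [hx, numBars]

lemma natCast_crossings_rotate (w : List Letter) {n : ℕ} (hn : n ≤ w.length) :
    (crossings (w.rotate n) : ZMod (numBars w)) =
      crossings w - numDots w * numBars (w.take n) := by
  have h := congrArg (Nat.cast : ℕ → ZMod (numBars w)) (crossings_rotate_add w hn)
  push_cast [ZMod.natCast_self] at h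
  linear_combination h

lemma rotate_succ_mem_closedWords_iff {p q m k : ℕ} {i : ℤ} {w : List Letter}
    (hw : w ∈ words p q m) (hk : k < p + q + m) :
    w.rotate (k + 1) ∈ closedWords p q m i ↔ w[k]? ≠ some dot ∧
      (crossings w : ZMod (q + m)) =
        i + ((p + m : ℕ) : ZMod (q + m)) * numBars (w.take (k + 1)) := by
  have hlen := length_of_mem_words hw
  have hcross := natCast_crossings_rotate w (n := k + 1) (by omega)
  rw [numBars_of_mem_words hw, numDots_of_mem_words hw] at hcross
  rw [closedWords, mem_filter, getLast?_rotate_succ w (by omega), hcross, sub_eq_iff_eq_add]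
  simp [rotate_mem_words hw]

lemma card_filter_rotate_mem_closedWords {p q m : ℕ} (i : ℤ) {n : ℕ} (hn : n ≤ p + q + m) :
    #{w ∈ words p q m | w.rotate n ∈ closedWords p q m i} = #(closedWords p q m i) := by
  have hrot {w : List Letter} (hw : w ∈ words p q m) {a b : ℕ} (hab : a + b = p + q + m) :
      (w.rotate a).rotate b = w := by
    rw [List.rotate_rotate, hab, ← length_of_mem_words hw, List.rotate_length]
  refine card_nbij' (·.rotate n) (·.rotate (p + q + m - n)) (fun w hw => (mem_filter.1 hw).2)
    (fun v hv => ?_) (fun w hw => hrot (mem_filter.1 hw).1 (by omega))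
    (fun v hv => hrot (mem_filter.1 hv).1 (by omega))
  have hv' := (mem_filter.1 hv).1
  rw [coe_filter]
  exact ⟨rotate_mem_words hv' _, by rwa [hrot hv' (by omega)]⟩

noncomputable def numSolutions (a c : ℕ) (s : ℤ) : ℕ :=
  Nat.card {u : ZMod c // (a : ZMod c) * u = s}

lemma card_range_filter_natCast_succ (c : ℕ) [NeZero c] (P : ZMod c → Prop) [DecidablePred P] :
    #{t ∈ range c | P ((t + 1 : ℕ) : ZMod c)} = Nat.card {u // P u} := by
  rw [Nat.card_eq_fintype_card, Fintype.card_subtype]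
  refine card_nbij' (fun t => ((t + 1 : ℕ) : ZMod c)) (fun u => (u - 1).val) ?_ ?_ ?_ ?_
  · intro t ht
    simp only [coe_filter, mem_range] at ht
    simpa using ht.2
  · intro u hu
    simpa [ZMod.val_lt] using hu
  · intro t ht
    simp [ZMod.val_cast_of_lt (mem_range.1 (mem_filter.1 ht).1)]
  · intro u _
    simp

lemma card_mul_card_closedWords (p q m : ℕ) (i : ℤ) [NeZero (q + m)] :
    (p + q + m) * #(closedWords p q m i) =
      ∑ w ∈ words p q m, numSolutions (p + m) (q + m) (crossings w - i) := by
  calc (p + q + m) * #(closedWords p q m i)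
      = ∑ k ∈ range (p + q + m), #{w ∈ words p q m | w.rotate (k + 1) ∈ closedWords p q m i} := by
        rw [sum_congr rfl fun k hk => card_filter_rotate_mem_closedWords i (mem_range.1 hk),
          sum_const, card_range, smul_eq_mul]
    _ = ∑ w ∈ words p q m, #{k ∈ range (p + q + m) | w.rotate (k + 1) ∈ closedWords p q m i} := by
        simp only [card_filter]
        exact sum_comm
    _ = _ := by
        refine sum_congr rfl fun w hw => ?_
        rw [filter_congr fun k hk => rotate_succ_mem_closedWords_iff hw (mem_range.1 hk),
          ← length_of_mem_words hw, card_filter_bar_positions w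
            (fun t => (crossings w : ZMod (q + m)) = i + ((p + m : ℕ) : ZMod (q + m)) * t),
          numBars_of_mem_words hw, card_range_filter_natCast_succ (q + m)
            (fun u => (crossings w : ZMod (q + m)) = i + ((p + m : ℕ) : ZMod (q + m)) * u),
          numSolutions]
        exact Nat.card_congr (.subtypeEquivRight fun u => by
          push_cast
          constructor <;> intro h <;> linear_combination -h)

lemma intCast_ediv_sub_mul_val {a c : ℕ} [NeZero c] {s x y : ℤ} (h : a * x + c * y = s) :
    (((s - a * ((x : ZMod c).val : ℤ)) / c : ℤ) : ZMod a) = y := by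
  have hc : (c : ℤ) ≠ 0 := by exact_mod_cast NeZero.ne c
  rw [ZMod.val_intCast, Int.emod_def, show s - a * (x - c * (x / c)) = c * (y + a * (x / c)) by
    rw [← h]; ring, Int.mul_ediv_cancel_left _ hc]
  simp

def solutionTransfer (a c : ℕ) (s : ℤ) (u : ZMod c) : ZMod a :=
  (((s - a * u.val) / c : ℤ) : ZMod a)

lemma solutionTransfer_spec {a c : ℕ} [NeZero a] [NeZero c] {s : ℤ} {u : ZMod c}
    (hu : (a : ZMod c) * u = s) :
    (c : ZMod a) * solutionTransfer a c s u = s ∧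
      solutionTransfer c a s (solutionTransfer a c s u) = u := by
  obtain ⟨y, hy⟩ : ∃ y : ℤ, a * (u.val : ℤ) + c * y = s := by
    obtain ⟨y, hy⟩ : (c : ℤ) ∣ s - a * u.val :=
      (ZMod.intCast_eq_intCast_iff_dvd_sub _ _ _).1 (by simpa using hu)
    exact ⟨y, by linarith⟩
  have hu' : ((u.val : ℤ) : ZMod c) = u := by simp
  have hfu : solutionTransfer a c s u = y := by
    simpa only [solutionTransfer, hu'] using intCast_ediv_sub_mul_val hy
  refine ⟨?_, ?_⟩
  · have := congrArg (Int.cast : ℤ → ZMod a) hy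
    push_cast [ZMod.natCast_self] at this
    rw [hfu, ← this]
    ring
  · rw [hfu, solutionTransfer, intCast_ediv_sub_mul_val (x := y) (y := u.val) (by linarith), hu']

/-- Both sides count the integer solutions of `a x + c y = s` modulo `(x, y) ↦ (x + c, y - a)`. -/
lemma numSolutions_comm (a c : ℕ) [NeZero a] [NeZero c] (s : ℤ) :
    numSolutions a c s = numSolutions c a s :=
  Nat.card_congr
    { toFun := fun u => ⟨solutionTransfer a c s u, (solutionTransfer_spec u.2).1⟩
      invFun := fun v => ⟨solutionTransfer c a s v, (solutionTransfer_spec v.2).1⟩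
      left_inv := fun u => Subtype.ext (solutionTransfer_spec u.2).2
      right_inv := fun v => Subtype.ext (solutionTransfer_spec v.2).2 }

lemma reverse_map_swap_involutive :
    Function.Involutive fun w : List Letter => w.reverse.map swap := by
  intro w
  simp [List.map_reverse, Function.comp_def]

lemma sum_words_crossings_comm (p q m : ℕ) (f : ℕ → ℕ) :
    ∑ w ∈ words p q m, f (crossings w) = ∑ w ∈ words q p m, f (crossings w) :=
  sum_nbij' (·.reverse.map swap) (·.reverse.map swap)
    (fun _ hw => reverse_map_swap_mem_words hw) (fun _ hw => reverse_map_swap_mem_words hw)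
    (fun w _ => reverse_map_swap_involutive w) (fun w _ => reverse_map_swap_involutive w)
    (fun w _ => by rw [crossings_reverse_map_swap])

end FredmanReciprocity

open FredmanReciprocity in
/-- Generalised (Fredman) reciprocity: for nonnegative integers `p, q, m` with `q+m ≥ 1` and
`p+m ≥ 1` and any integer `i`, `T_i(q+m, p, m) = T_i(p+m, q, m)`, where `T_i(n,p,m)` counts
pairs `(λ, J)` with `λ` a tuple of `n` nonnegative integers summing to `p`, `J` an `m`-element
subset of `{0,…,n-1}`, and `Σ j·λ_j + Σ_{j∈J} j ≡ i (mod n)`. -/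
theorem generalized_fredman_reciprocity (p q m : ℕ) (h1 : 1 ≤ q + m) (h2 : 1 ≤ p + m) (i : ℤ) :
    Nat.card {lJ : (Fin (q + m) → ℕ) × Finset (Fin (q + m)) //
      (∑ j, lJ.1 j) = p ∧ lJ.2.card = m ∧
      ((∑ j : Fin (q + m), (j : ℤ) * (lJ.1 j : ℤ)) + ∑ j ∈ lJ.2, (j : ℤ))
        ≡ i [ZMOD ((q + m : ℕ) : ℤ)]} =
    Nat.card {lJ : (Fin (p + m) → ℕ) × Finset (Fin (p + m)) //
      (∑ j, lJ.1 j) = q ∧ lJ.2.card = m ∧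
      ((∑ j : Fin (p + m), (j : ℤ) * (lJ.1 j : ℤ)) + ∑ j ∈ lJ.2, (j : ℤ))
        ≡ i [ZMOD ((p + m : ℕ) : ℤ)]} := by
  have : NeZero (q + m) := ⟨by omega⟩
  have : NeZero (p + m) := ⟨by omega⟩
  rw [card_pairs_eq_card_closedWords, card_pairs_eq_card_closedWords]
  refine Nat.eq_of_mul_eq_mul_left (show 0 < p + q + m by omega) ?_
  calc (p + q + m) * #(closedWords p q m i)
      = ∑ w ∈ words p q m, numSolutions (p + m) (q + m) (crossings w - i) :=
        card_mul_card_closedWords p q m i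
    _ = ∑ w ∈ words p q m, numSolutions (q + m) (p + m) (crossings w - i) := by
        simp only [numSolutions_comm (p + m) (q + m)]
    _ = ∑ w ∈ words q p m, numSolutions (q + m) (p + m) (crossings w - i) :=
        sum_words_crossings_comm p q m fun c => numSolutions (q + m) (p + m) (c - i)
    _ = (q + p + m) * #(closedWords q p m i) := (card_mul_card_closedWords q p m i).symm
    _ = (p + q + m) * #(closedWords q p m i) := by rw [add_comm q p]
end

section
/- For every real number z with |z| < 1, the infinite product ∏_{d=1}^∞ (1 + z^d)^{φ(d)/d} converges (in the sense that the partial products converge, i.e., the family of factors has the product) and equals exp(z/(1 − z²)), where φ is Euler's totient function and the factors are real powers of the positive real numbers 1 + z^d. -/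
/-!
Taking logarithms, the product becomes `∑_d (φ(d)/d) log(1 + z^d)`, and since
`log(1 + x) = log(1 - x²) - log(1 - x)` it is `L(z) - L(z²)` with
`L(w) = ∑_d (φ(d)/d) (-log(1 - w^d))`. Expanding `-log(1 - w^d) = ∑_k w^{dk}/k` turns `L(w)` into
the absolutely convergent double series `∑_{d,k} φ(d) w^{dk}/(dk)`; grouping its terms by
`n = dk` and using `∑_{d ∣ n} φ(d) = n` leaves `∑_n w^n = w/(1 - w)`.
-/

open Real

theorem abs_pow_lt_one {R : Type*} [Ring R] [LinearOrder R] [IsStrictOrderedRing R] {x : R}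
    (hx : |x| < 1) {n : ℕ} (hn : n ≠ 0) : |x ^ n| < 1 := by
  rw [abs_pow]
  exact pow_lt_one₀ (abs_nonneg x) hx hn

theorem HasSum.sum_divisorsAntidiagonal {α : Type*} [AddCommMonoid α] [TopologicalSpace α]
    [ContinuousAdd α] [RegularSpace α] {f : ℕ × ℕ → α} {a : α}
    (h : HasSum (fun c : ℕ+ × ℕ+ => f (c.1, c.2)) a) :
    HasSum (fun n : ℕ+ => ∑ x ∈ (n : ℕ).divisorsAntidiagonal, f x) a := by
  rw [← sigmaAntidiagonalEquivProd.hasSum_iff] at h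
  refine h.sigma fun n => ?_
  rw [← Finset.sum_attach]
  exact hasSum_fintype _

theorem hasSum_pnat_pow_div_log_of_abs_lt_one {x : ℝ} (hx : |x| < 1) :
    HasSum (fun k : ℕ+ => x ^ (k : ℕ) / k) (-log (1 - x)) := by
  refine hasSum_pnat_iff_hasSum_succ (f := fun k : ℕ => x ^ k / k).mpr ?_
  simpa using hasSum_pow_div_log_of_abs_lt_one hx

theorem hasSum_pnat_geometric_of_abs_lt_one {x : ℝ} (hx : |x| < 1) :
    HasSum (fun n : ℕ+ => x ^ (n : ℕ)) (x / (1 - x)) := by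
  refine hasSum_pnat_iff_hasSum_succ (f := fun n : ℕ => x ^ n).mpr ?_
  simpa [pow_succ', div_eq_mul_inv] using (hasSum_geometric_of_abs_lt_one hx).mul_left x

theorem hasSum_totient_div_mul_neg_log_one_sub_pow {w : ℝ} (hw : |w| < 1) :
    HasSum (fun d : ℕ+ => (Nat.totient d : ℝ) / d * -log (1 - w ^ (d : ℕ))) (w / (1 - w)) := by
  set F : ℕ × ℕ → ℝ := fun p => Nat.totient p.1 * w ^ (p.1 * p.2) / (p.1 * p.2)
  have hF : Summable fun c : ℕ+ × ℕ+ => F (c.1, c.2) := by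
    have hw' : ‖|w|‖ < 1 := by rwa [norm_eq_abs, abs_abs]
    refine Summable.of_norm_bounded (by simpa using summable_prod_mul_pow 0 hw') fun c => ?_
    have hpos : (0 : ℝ) < (c.1 : ℕ) * (c.2 : ℕ) := by positivity
    have htot : (Nat.totient c.1 : ℝ) ≤ (c.1 : ℕ) * (c.2 : ℕ) := by
      exact_mod_cast (Nat.totient_le _).trans (Nat.le_mul_of_pos_right _ c.2.pos)
    rw [norm_eq_abs, abs_div, abs_mul, abs_pow, abs_of_pos hpos, Nat.abs_cast,
      div_le_iff₀ hpos, mul_comm]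
    gcongr
  obtain ⟨S, hS⟩ := hF
  have hrows : HasSum (fun d : ℕ+ => (Nat.totient d : ℝ) / d * -log (1 - w ^ (d : ℕ))) S := by
    refine hS.prod_fiberwise fun d => ?_
    refine ((hasSum_pnat_pow_div_log_of_abs_lt_one (abs_pow_lt_one hw d.ne_zero)).mul_left
      _).congr_fun fun k => ?_
    simp only [F, pow_mul]
    field_simp
  have hdiag : HasSum (fun n : ℕ+ => w ^ (n : ℕ)) S := by
    refine hS.sum_divisorsAntidiagonal.congr_fun fun n => ?_
    have hterm : ∀ x ∈ (n : ℕ).divisorsAntidiagonal,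
        F x = Nat.totient x.1 * (w ^ (n : ℕ) / (n : ℕ)) := fun x hx => by
      simp only [F, ← Nat.cast_mul, (Nat.mem_divisorsAntidiagonal.1 hx).1, mul_div_assoc]
    have htot : ∑ x ∈ (n : ℕ).divisorsAntidiagonal, (Nat.totient x.1 : ℝ) = (n : ℕ) := by
      exact_mod_cast (Nat.sum_divisorsAntidiagonal fun a _ => Nat.totient a).trans
        (Nat.sum_totient n)
    rw [Finset.sum_congr rfl hterm, ← Finset.sum_mul, htot]
    field_simp
  rwa [hdiag.unique (hasSum_pnat_geometric_of_abs_lt_one hw)] at hrows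

theorem Real.log_one_sub_sq {x : ℝ} (h₁ : 1 - x ≠ 0) (h₂ : 1 + x ≠ 0) :
    log (1 - x ^ 2) = log (1 - x) + log (1 + x) := by
  rw [← log_mul h₁ h₂]
  ring_nf

theorem HasSum.hasProd_rpow {ι : Type*} {f g : ι → ℝ} {a : ℝ} (hf : ∀ i, 0 < f i)
    (h : HasSum (fun i => log (f i) * g i) a) : HasProd (fun i => f i ^ g i) (Real.exp a) :=
  h.rexp.congr_fun fun i => rpow_def_of_pos (hf i) (g i)

/-- For `|z| < 1`, the infinite product `∏_{d ≥ 1} (1 + z^d)^{φ(d)/d}` (real powers of the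
positive reals `1 + z^d`) has value `exp(z/(1 − z²))`. -/
theorem prod_one_add_pow_totient (z : ℝ) (h : |z| < 1) :
    HasProd (fun d : {d : ℕ // 1 ≤ d} =>
        (1 + z ^ d.val) ^ ((Nat.totient d.val : ℝ) / (d.val : ℝ)))
      (Real.exp (z / (1 - z ^ 2))) := by
  have hsum := (hasSum_totient_div_mul_neg_log_one_sub_pow h).sub
    (hasSum_totient_div_mul_neg_log_one_sub_pow (abs_pow_lt_one h two_ne_zero))
  have hval : z / (1 - z) - z ^ 2 / (1 - z ^ 2) = z / (1 - z ^ 2) := by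
    obtain ⟨hz₁, hz₂⟩ := abs_lt.1 h
    rw [show 1 - z ^ 2 = (1 - z) * (1 + z) by ring]
    field_simp [show 1 - z ≠ 0 by linarith, show 1 + z ≠ 0 by linarith]
    ring
  rw [hval] at hsum
  have hzd (d : ℕ+) := abs_lt.1 (abs_pow_lt_one h d.ne_zero)
  have hlog (d : ℕ+) : log (1 + z ^ (d : ℕ)) * ((Nat.totient d : ℝ) / (d : ℕ)) =
      (Nat.totient d : ℝ) / (d : ℕ) * -log (1 - z ^ (d : ℕ)) -
        (Nat.totient d : ℝ) / (d : ℕ) * -log (1 - (z ^ 2) ^ (d : ℕ)) := by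
    rw [← pow_mul, mul_comm 2, pow_mul,
      log_one_sub_sq (by linarith [(hzd d).2]) (by linarith [(hzd d).1])]
    ring
  have hprod := (hsum.congr_fun hlog).hasProd_rpow fun d => by linarith [(hzd d).1]
  -- `ℕ+` is `{n : ℕ // 0 < n}`, definitionally the index type of the statement.
  exact hprod
end

section
/- Let n ≥ 1 and 0 ≤ m ≤ n be integers and i an integer. Let b_i(n,m) be the number of m-element subsets J of {0, 1, …, n−1} such that Σ_{j∈J} j ≡ i (mod n). Then n·b_i(n,m) = (−1)^m · Σ_{d | gcd(n,m)} (−1)^{m/d} · c_d(i) · binomial(n/d, m/d), where d runs over the positive common divisors of n and m (with every positive integer dividing 0). -/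
/-! Filter the subsets by the characters of `ℤ/n`: `n·b_i(n,m)` is the sum over the `n`-th roots
of unity `ω` of `ω^{-i} e_m(1, ω, …, ω^{n-1})`. If `ω` has order `d`, then
`∏_{j<n} (X + ω^j) = (X^d - (-1)^d)^{n/d}`, so `e_m` vanishes unless `d ∣ m`, when it is
`±binom(n/d, m/d)`. What remains is the sum of `ω^{-i}` over the primitive `d`-th roots, and
Möbius inversion of the orthogonality relation `Σ_{ω^d = 1} ω^j = d·[d ∣ j]` identifies it with
the Ramanujan sum `c_d(i)`. -/

open Finset

/-- The Ramanujan sum `c_d(i) = Σ_{e | gcd(d,i)} μ(d/e)·e`. -/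
def ramanujanSum (d : ℕ) (i : ℤ) : ℤ :=
  ∑ e ∈ (Nat.gcd d i.natAbs).divisors, ArithmeticFunction.moebius (d / e) * (e : ℤ)

open Polynomial

theorem ramanujanSum_neg (d : ℕ) (i : ℤ) : ramanujanSum d (-i) = ramanujanSum d i := by
  rw [ramanujanSum, ramanujanSum, Int.natAbs_neg]

theorem Nat.divisors_gcd_eq_filter {n : ℕ} (hn : n ≠ 0) (a : ℕ) :
    (n.gcd a).divisors = {d ∈ n.divisors | d ∣ a} := by
  rw [← Nat.divisors_filter_dvd_of_dvd hn (Nat.gcd_dvd_left n a)]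
  refine Finset.filter_congr fun d hd => ?_
  rw [Nat.dvd_gcd_iff, and_iff_right (Nat.dvd_of_mem_divisors hd)]

theorem Function.Periodic.prod_range_mul {M : Type*} [CommMonoid M] {f : ℕ → M} {d : ℕ}
    (hf : Function.Periodic f d) (g : ℕ) :
    ∏ j ∈ range (g * d), f j = (∏ j ∈ range d, f j) ^ g := by
  induction g with
  | zero => simp
  | succ g ih =>
    rw [Nat.succ_mul, prod_range_add, ih, pow_succ]
    refine congrArg _ (prod_congr rfl fun j _ => ?_)
    rw [add_comm]
    exact hf.nat_mul g j

theorem Polynomial.sum_nthRootsFinset_one_eq_sum_divisors {R M : Type*} [CommRing R] [IsDomain R]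
    [AddCommMonoid M] (n : ℕ) (f : R → M) :
    ∑ ω ∈ nthRootsFinset n (1 : R), f ω = ∑ d ∈ n.divisors, ∑ η ∈ primitiveRoots d R, f η := by
  classical
  rw [IsPrimitiveRoot.nthRoots_one_eq_biUnion_primitiveRoots, sum_biUnion]
  exact fun _ _ _ _ hne => IsPrimitiveRoot.disjoint hne

namespace IsPrimitiveRoot

section IsDomain

variable {R : Type*} [CommRing R] [IsDomain R] {ζ : R} {n : ℕ}

theorem sum_nthRootsFinset_one_eq_sum_range {M : Type*} [AddCommMonoid M]
    (hζ : IsPrimitiveRoot ζ n) (f : R → M) :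
    ∑ ω ∈ nthRootsFinset n (1 : R), f ω = ∑ k ∈ range n, f (ζ ^ k) := by
  classical
  have himage : nthRootsFinset n (1 : R) = (range n).image (ζ ^ ·) := by
    rcases n.eq_zero_or_pos with rfl | hn
    · simp
    have : NeZero n := ⟨hn.ne'⟩
    ext ω
    simp only [Polynomial.mem_nthRootsFinset hn, mem_image, mem_range]
    constructor
    · exact hζ.eq_pow_of_pow_eq_one
    · rintro ⟨k, -, rfl⟩
      rw [← pow_mul, mul_comm, pow_mul, hζ.pow_eq_one, one_pow]
  rw [himage, sum_image hζ.injOn_pow]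

theorem prod_range_mul_X_add_C_pow (hζ : IsPrimitiveRoot ζ n) (hn : 0 < n) (g : ℕ) :
    ∏ j ∈ range (g * n), (X + C (ζ ^ j)) = (X ^ n - C ((-1) ^ n)) ^ g := by
  have hperiodic : Function.Periodic (fun j => X + C (ζ ^ j)) n := fun j => by
    simp only [pow_add, hζ.pow_eq_one, mul_one]
  rw [hperiodic.prod_range_mul, X_pow_sub_C_eq_prod hζ hn rfl]
  simp only [mul_neg_one, map_neg, sub_neg_eq_add]

theorem sum_powersetCard_prod_pow {d m : ℕ} (hζ : IsPrimitiveRoot ζ d) (hd : 0 < d) (hdn : d ∣ n)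
    (hm : m ≤ n) :
    ∑ J ∈ (univ : Finset (Fin n)).powersetCard m, ∏ j ∈ J, ζ ^ (j : ℕ) =
      if d ∣ m then (-1) ^ (m + m / d) * ((n / d).choose (m / d) : R) else 0 := by
  obtain ⟨g, rfl⟩ := hdn
  have hprod : ∏ j : Fin (d * g), (X + C (ζ ^ (j : ℕ))) =
      expand R d ((X + C (-(-1) ^ d)) ^ g) := by
    rw [Fin.prod_univ_eq_prod_range (fun j => X + C (ζ ^ j)), mul_comm,
      hζ.prod_range_mul_X_add_C_pow hd]
    simp [sub_eq_add_neg]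
  have hcoeff := prod_X_add_C_coeff (univ : Finset (Fin (d * g))) (fun j => ζ ^ (j : ℕ))
    (k := d * g - m) (by simp)
  rw [hprod, coeff_expand hd, coeff_X_add_C_pow, card_univ, Fintype.card_fin,
    Nat.sub_sub_self hm] at hcoeff
  simp only [Nat.dvd_sub_iff_right hm (dvd_mul_right d g)] at hcoeff
  rw [← hcoeff, Nat.mul_div_cancel_left g hd]
  split_ifs with hdm
  · obtain ⟨q, rfl⟩ := hdm
    have hq : q ≤ g := Nat.le_of_mul_le_mul_left hm hd
    rw [← Nat.mul_sub, Nat.mul_div_cancel_left _ hd, Nat.mul_div_cancel_left _ hd,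
      Nat.sub_sub_self hq, Nat.choose_symm hq, neg_pow, ← pow_mul, ← pow_add, add_comm]
  · rfl

end IsDomain

section Field

variable {K : Type*} [Field K] {ζ : K} {n : ℕ}

theorem sum_nthRootsFinset_one_zpow (hζ : IsPrimitiveRoot ζ n) (j : ℤ) :
    ∑ ω ∈ nthRootsFinset n (1 : K), ω ^ j = if (n : ℤ) ∣ j then (n : K) else 0 := by
  have hpow : ∀ k : ℕ, (ζ ^ k) ^ j = (ζ ^ j) ^ k := fun k => by
    rw [← zpow_natCast, ← zpow_mul, mul_comm, zpow_mul, zpow_natCast]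
  rw [hζ.sum_nthRootsFinset_one_eq_sum_range]
  simp only [hpow]
  split_ifs with h
  · simp [(hζ.zpow_eq_one_iff_dvd j).2 h]
  · rw [geom_sum_eq (mt (hζ.zpow_eq_one_iff_dvd j).1 h), ← hpow, hζ.pow_eq_one, one_zpow,
      sub_self, zero_div]

theorem sum_primitiveRoots_zpow_eq_ramanujanSum (hζ : IsPrimitiveRoot ζ n) (j : ℤ) :
    ∑ η ∈ primitiveRoots n K, η ^ j = ramanujanSum n j := by
  rcases n.eq_zero_or_pos with rfl | hn
  · simp [ramanujanSum]
  have hinv := (ArithmeticFunction.sum_eq_iff_sum_mul_moebius_eq_on {e | e ∣ n}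
    (fun _ _ => dvd_trans) (f := fun e => ∑ η ∈ primitiveRoots e K, η ^ j)
    (g := fun e => if (e : ℤ) ∣ j then (e : K) else 0)).1 ?_ n hn dvd_rfl
  · rw [← hinv, Nat.sum_divisorsAntidiagonal' (fun a b => (ArithmeticFunction.moebius a : K) *
      if (b : ℤ) ∣ j then (b : K) else 0), ramanujanSum, Nat.divisors_gcd_eq_filter hn.ne',
      sum_filter]
    push_cast
    simp [Int.natCast_dvd]
  · intro e _ hen
    rw [← sum_nthRootsFinset_one_eq_sum_divisors]
    exact (hζ.pow hn (Nat.div_mul_cancel hen).symm).sum_nthRootsFinset_one_zpow j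

theorem card_filter_modEq_mul_eq_sum_nthRootsFinset {α : Type*} (hζ : IsPrimitiveRoot ζ n)
    (s : Finset α) (w : α → ℤ) (i : ℤ) :
    (#{x ∈ s | w x ≡ i [ZMOD n]} : K) * n =
      ∑ ω ∈ nthRootsFinset n (1 : K), ω ^ (-i) * ∑ x ∈ s, ω ^ w x := by
  calc (#{x ∈ s | w x ≡ i [ZMOD n]} : K) * n
      = ∑ x ∈ s, if (n : ℤ) ∣ w x - i then (n : K) else 0 := by
        simp only [sum_ite, sum_const_zero, add_zero, sum_const, nsmul_eq_mul,
          Int.modEq_comm (a := w _), Int.modEq_iff_dvd]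
    _ = ∑ x ∈ s, ∑ ω ∈ nthRootsFinset n (1 : K), ω ^ (w x - i) := by
        simp only [hζ.sum_nthRootsFinset_one_zpow]
    _ = _ := by
        rw [sum_comm]
        refine sum_congr rfl fun ω hω => ?_
        rw [mul_sum]
        refine sum_congr rfl fun x _ => ?_
        rw [← zpow_add₀ (ne_zero_of_mem_nthRootsFinset one_ne_zero hω), neg_add_eq_sub]

theorem sum_nthRootsFinset_zpow_mul_sum_powersetCard {m : ℕ} (hζ : IsPrimitiveRoot ζ n)
    (hm : m ≤ n) (j : ℤ) :
    ∑ ω ∈ nthRootsFinset n (1 : K),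
        ω ^ j * ∑ J ∈ (univ : Finset (Fin n)).powersetCard m, ∏ i ∈ J, ω ^ (i : ℕ) =
      ∑ d ∈ (n.gcd m).divisors, (-1) ^ (m + m / d) * ((n / d).choose (m / d) : K) *
        ramanujanSum d j := by
  rcases n.eq_zero_or_pos with rfl | hn
  · obtain rfl : m = 0 := Nat.le_zero.1 hm
    simp
  rw [sum_nthRootsFinset_one_eq_sum_divisors, Nat.divisors_gcd_eq_filter hn.ne', sum_filter]
  refine sum_congr rfl fun d hd => ?_
  have hd0 := Nat.pos_of_mem_divisors hd
  have hdn := Nat.dvd_of_mem_divisors hd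
  have hη : IsPrimitiveRoot (ζ ^ (n / d)) d := hζ.pow hn (Nat.div_mul_cancel hdn).symm
  calc ∑ η ∈ primitiveRoots d K,
        η ^ j * ∑ J ∈ (univ : Finset (Fin n)).powersetCard m, ∏ i ∈ J, η ^ (i : ℕ)
      = ∑ η ∈ primitiveRoots d K,
          η ^ j * if d ∣ m then (-1) ^ (m + m / d) * ((n / d).choose (m / d) : K) else 0 :=
        sum_congr rfl fun η hη => by
          rw [((mem_primitiveRoots hd0).1 hη).sum_powersetCard_prod_pow hd0 hdn hm]
    _ = _ := by
        rw [← sum_mul, hη.sum_primitiveRoots_zpow_eq_ramanujanSum, mul_comm]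
        split_ifs <;> simp

end Field

end IsPrimitiveRoot

/-- For `n ≥ 1`, `0 ≤ m ≤ n` and an integer `i`, let `b_i(n,m)` be the number of
`m`-element subsets `J` of `{0,…,n-1}` with `Σ_{j∈J} j ≡ i (mod n)`.  Then
`n·b_i(n,m) = (−1)^m Σ_{d | gcd(n,m)} (−1)^{m/d} c_d(i) binom(n/d, m/d)`. -/
theorem dim_isotypic_exterior (n m : ℕ) (hn : 1 ≤ n) (hm : m ≤ n) (i : ℤ) :
    (n : ℤ) *
      (Nat.card {J : Finset (Fin n) //
        J.card = m ∧ (∑ j ∈ J, (j : ℤ)) ≡ i [ZMOD (n : ℤ)]} : ℤ) =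
    (-1) ^ m *
      ∑ d ∈ (Nat.gcd n m).divisors,
        (-1) ^ (m / d) * ramanujanSum d i * (Nat.choose (n / d) (m / d) : ℤ) := by
  have hζ := Complex.isPrimitiveRoot_exp n (Nat.one_le_iff_ne_zero.mp hn)
  have hcard : Nat.card {J : Finset (Fin n) //
      J.card = m ∧ (∑ j ∈ J, (j : ℤ)) ≡ i [ZMOD (n : ℤ)]} =
      #((univ.powersetCard m).filter fun J : Finset (Fin n) =>
        (∑ j ∈ J, (j : ℤ)) ≡ i [ZMOD (n : ℤ)]) := by
    rw [Nat.card_eq_fintype_card, Fintype.card_subtype]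
    congr 1
    ext J
    simp
  have hzpow : ∀ (ω : ℂ) (J : Finset (Fin n)), ω ^ (∑ j ∈ J, (j : ℤ)) = ∏ j ∈ J, ω ^ (j : ℕ) :=
    fun ω J => by rw [← Nat.cast_sum, zpow_natCast, prod_pow_eq_pow_sum]
  apply Int.cast_injective (α := ℂ)
  push_cast
  rw [hcard, mul_comm, hζ.card_filter_modEq_mul_eq_sum_nthRootsFinset]
  simp only [hzpow]
  rw [hζ.sum_nthRootsFinset_zpow_mul_sum_powersetCard hm, mul_sum]
  refine sum_congr rfl fun d _ => ?_
  rw [ramanujanSum_neg, pow_add]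
  ring
end

section
/- For every integer n ≥ 1 and every integer i, the number of (n−1)-element subsets J of {0, 1, …, 2n−2} with Σ_{j∈J} j ≡ i (mod 2n−1) equals the (n−1)-st Catalan number C_{n−1} = binomial(2(n−1), n−1)/n, independently of i. -/
/-!
Translating a `k`-subset `J` of `ℤ/m` by `c` moves its sum by `k • c`. When `gcd(k, m) = 1` every
residue is of the form `k • c`, so all `m` residues are the sum of equally many `k`-subsets, and
each count is `binomial(m, k) / m`. For `m = 2k + 1` this is the Catalan number `C_k`.
-/

open Finset

section SubsetSums

variable {G : Type*} [AddCommGroup G] [Fintype G] [DecidableEq G]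

variable (G) in
def subsetsCardSum (k : ℕ) (s : G) : Finset (Finset G) :=
  {J ∈ powersetCard k univ | ∑ j ∈ J, j = s}

theorem mem_subsetsCardSum {k : ℕ} {s : G} {J : Finset G} :
    J ∈ subsetsCardSum G k s ↔ #J = k ∧ ∑ j ∈ J, j = s := by
  simp [subsetsCardSum]

theorem card_subsetsCardSum_add_nsmul (k : ℕ) (s c : G) :
    #(subsetsCardSum G k s) = #(subsetsCardSum G k (s + k • c)) := by
  refine card_equiv (Equiv.addRight c).finsetCongr fun J => ?_
  simp only [mem_subsetsCardSum, Equiv.finsetCongr_apply, card_map, sum_map,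
    Equiv.coe_toEmbedding, Equiv.coe_addRight, sum_add_distrib, sum_const]
  constructor
  · rintro ⟨rfl, rfl⟩
    exact ⟨rfl, rfl⟩
  · rintro ⟨rfl, hsum⟩
    exact ⟨rfl, add_right_cancel hsum⟩

theorem card_subsetsCardSum_eq_of_coprime {k : ℕ} (hk : (Nat.card G).Coprime k) (s t : G) :
    #(subsetsCardSum G k s) = #(subsetsCardSum G k t) := by
  obtain ⟨c, hc : k • c = t - s⟩ := hk.nsmul_right_bijective.2 (t - s)
  rw [card_subsetsCardSum_add_nsmul k s c, hc, add_sub_cancel]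

theorem card_mul_card_subsetsCardSum {k : ℕ} (hk : (Nat.card G).Coprime k) (s : G) :
    Nat.card G * #(subsetsCardSum G k s) = (Nat.card G).choose k := by
  calc Nat.card G * #(subsetsCardSum G k s)
      = ∑ t : G, #(subsetsCardSum G k t) := by
        rw [sum_congr rfl fun t _ => card_subsetsCardSum_eq_of_coprime hk t s, sum_const,
          card_univ, smul_eq_mul, Nat.card_eq_fintype_card]
    _ = #(powersetCard k (univ : Finset G)) :=
        (card_eq_sum_card_fiberwise fun J _ => mem_univ (∑ j ∈ J, j)).symm
    _ = (Nat.card G).choose k := by rw [card_powersetCard, card_univ, Nat.card_eq_fintype_card]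

end SubsetSums

theorem two_mul_add_one_mul_catalan (k : ℕ) : (2 * k + 1) * catalan k = (2 * k + 1).choose k := by
  apply Nat.eq_of_mul_eq_mul_left k.succ_pos
  calc (k + 1) * ((2 * k + 1) * catalan k) = (2 * k + 1) * (2 * k).choose k := by
        rw [mul_left_comm, succ_mul_catalan_eq_centralBinom, Nat.centralBinom]
    _ = (k + 1) * (2 * k + 1).choose k := by
        rw [Nat.add_one_mul_choose_eq, Nat.choose_symm_half, mul_comm]

def finEquivZMod (m : ℕ) [NeZero m] : Fin m ≃ ZMod m where
  toFun j := (j : ℕ)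
  invFun x := ⟨x.val, x.val_lt⟩
  left_inv j := Fin.ext (ZMod.val_cast_of_lt j.isLt)
  right_inv := ZMod.natCast_zmod_val

theorem natCard_finsets_sum_modEq_eq_card_subsetsCardSum (m k : ℕ) [NeZero m] (i : ℤ) :
    Nat.card {J : Finset (Fin m) // J.card = k ∧ (∑ j ∈ J, (j : ℤ)) ≡ i [ZMOD (m : ℤ)]} =
      #(subsetsCardSum (ZMod m) k (i : ZMod m)) := by
  rw [← Nat.card_eq_finsetCard]
  refine Nat.card_congr ((finEquivZMod m).finsetCongr.subtypeEquiv fun J => ?_)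
  have hsum : ((∑ j ∈ J, (j : ℤ) : ℤ) : ZMod m) = ∑ j ∈ J, finEquivZMod m j := by
    push_cast
    rfl
  rw [mem_subsetsCardSum, Equiv.finsetCongr_apply, card_map, sum_map,
    Equiv.coe_toEmbedding, ← hsum, ZMod.intCast_eq_intCast_iff]

/-- For every `n ≥ 1` and every integer `i`, the number of `(n−1)`-element subsets `J` of
`{0,…,2n−2}` with `Σ_{j∈J} j ≡ i (mod 2n−1)` is the `(n−1)`-st Catalan number,
independently of `i`. -/
theorem count_subsets_eq_catalan (n : ℕ) (hn : 1 ≤ n) (i : ℤ) :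
    Nat.card {J : Finset (Fin (2 * n - 1)) //
      J.card = n - 1 ∧ (∑ j ∈ J, (j : ℤ)) ≡ i [ZMOD ((2 * n - 1 : ℕ) : ℤ)]} =
    catalan (n - 1) := by
  obtain ⟨k, rfl⟩ : ∃ k, n = k + 1 := ⟨n - 1, by omega⟩
  have hm : 2 * (k + 1) - 1 = 2 * k + 1 := by omega
  simp only [hm, Nat.add_sub_cancel]
  refine (natCard_finsets_sum_modEq_eq_card_subsetsCardSum (2 * k + 1) k i).trans ?_
  have hcop : (Nat.card (ZMod (2 * k + 1))).Coprime k := by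
    rw [Nat.card_zmod, mul_comm]
    exact (Nat.coprime_mul_left_add_left 1 k 2).2 (Nat.coprime_one_left k)
  have hcount := card_mul_card_subsetsCardSum hcop (i : ZMod (2 * k + 1))
  rw [Nat.card_zmod] at hcount
  apply Nat.eq_of_mul_eq_mul_left (show 0 < 2 * k + 1 by omega)
  rw [hcount, two_mul_add_one_mul_catalan]
end

section
/- Let G be a finite abelian group, written additively, of order n. Let N_G be the number of subsets S of G such that Σ_{g∈S} g = 0 (with the empty sum equal to 0). Then n · N_G = Σ_{d | n, d odd} φ_G(d) · 2^{n/d}, where the sum is over the odd positive divisors d of n and φ_G(d) denotes the number of elements of G of order exactly d. -/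
/-!
Expand the indicator of `∑ S = 0` in characters: `n · N_G = ∑_S ∑_ψ ψ(∑ S) = ∑_ψ ∏_g (1 + ψ g)`.
A character `ψ` of order `d` maps `G` onto the `d`-th roots of unity, each value being taken
`n / d` times, so its product is `(∏_{ζ^d = 1} (1 + ζ))^(n/d) = (1 - (-1)^d)^(n/d)`, that is
`2^(n/d)` for odd `d` and `0` for even `d`. Since the dual group is isomorphic to `G`, there are
`φ_G(d)` characters of order `d`.
-/

open Finset Polynomial

/-- Evaluate `X ^ d - 1 = ∏ (X - z)` at `-1`. -/
theorem IsPrimitiveRoot.prod_one_add_nthRootsFinset {R : Type*} [CommRing R] [IsDomain R]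
    {ζ : R} {d : ℕ} (hζ : IsPrimitiveRoot ζ d) (hd : 0 < d) :
    ∏ z ∈ nthRootsFinset d (1 : R), (1 + z) = 1 - (-1) ^ d := by
  have h := congr_arg (eval (-1 : R)) (X_pow_sub_one_eq_prod hd hζ)
  simp only [eval_sub, eval_pow, eval_X, eval_one, eval_prod, eval_C] at h
  rw [prod_congr rfl fun z _ => (neg_add' 1 z).symm, prod_neg, hζ.card_nthRootsFinset] at h
  have hsq : ((-1 : R) ^ d) ^ 2 = 1 := by rw [← pow_mul, mul_comm, pow_mul, neg_one_sq, one_pow]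
  linear_combination -(-1 : R) ^ d * h - (∏ z ∈ nthRootsFinset d (1 : R), (1 + z) - 1) * hsq

namespace AddChar

theorem map_sum_eq_prod {G M : Type*} [AddCommMonoid G] [CommMonoid M] (ψ : AddChar G M)
    (s : Finset G) : ψ (∑ g ∈ s, g) = ∏ g ∈ s, ψ g :=
  map_prod ψ.toMonoidHom Multiplicative.ofAdd s

theorem sum_apply_sum_eq_prod_one_add {G R : Type*} [AddCommMonoid G] [Fintype G]
    [CommSemiring R] (ψ : AddChar G R) : ∑ s : Finset G, ψ (∑ g ∈ s, g) = ∏ g, (1 + ψ g) := by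
  rw [prod_one_add, powerset_univ]
  exact sum_congr rfl fun s _ => ψ.map_sum_eq_prod s

section

variable {G M : Type*} [AddGroup G] [Fintype G] [CommMonoid M]

theorem orderOf_dvd_card (ψ : AddChar G M) : orderOf ψ ∣ Fintype.card G :=
  orderOf_dvd_of_pow_eq_one <| DFunLike.ext _ _ fun a => by
    rw [pow_apply, ← map_nsmul_eq_pow, card_nsmul_eq_zero, map_zero_eq_one, one_apply]

theorem orderOf_pos (ψ : AddChar G M) : 0 < orderOf ψ :=
  Nat.pos_of_dvd_of_pos ψ.orderOf_dvd_card Fintype.card_pos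

theorem card_fiber_eq_card_ker [DecidableEq M] (ψ : AddChar G M) (b : G) :
    #{a | ψ a = ψ b} = #{a | ψ a = 1} := by
  refine card_bij' (fun a _ => a - b) (fun a _ => a + b) ?_ ?_ (by simp) (by simp)
  · simp only [mem_filter, mem_univ, true_and]
    intro a ha
    rw [sub_eq_add_neg, map_add_eq_mul, ha, ← map_add_eq_mul, add_neg_cancel, map_zero_eq_one]
  · simp only [mem_filter, mem_univ, true_and]
    intro a ha
    rw [map_add_eq_mul, ha, one_mul]

end

section

variable {G R : Type*} [AddGroup G] [CommRing R] [IsDomain R]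

/-- The values of `ψ` form a finite subgroup of `Rˣ`, which is cyclic. -/
theorem exists_forall_apply_eq_pow [Finite G] (ψ : AddChar G R) :
    ∃ a₀, ∀ a, ∃ k : ℕ, ψ a = ψ a₀ ^ k := by
  let φ := ψ.toMonoidHom.toHomUnits
  have : Finite φ.range := Set.finite_range φ
  obtain ⟨⟨_, x₀, rfl⟩, hgen⟩ := IsCyclic.exists_generator (α := φ.range)
  refine ⟨x₀.toAdd, fun a => ?_⟩
  obtain ⟨k, hk⟩ := mem_powers_iff_mem_zpowers.2 (hgen ⟨φ (.ofAdd a), a, rfl⟩)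
  exact ⟨k, congr_arg (fun u : φ.range => ((u : Rˣ) : R)) hk.symm⟩

theorem exists_isPrimitiveRoot_apply [Finite G] (ψ : AddChar G R) :
    ∃ a₀, IsPrimitiveRoot (ψ a₀) (orderOf ψ) := by
  obtain ⟨a₀, hgen⟩ := ψ.exists_forall_apply_eq_pow
  refine ⟨a₀, ?_⟩
  convert IsPrimitiveRoot.orderOf (ψ a₀) using 1
  refine orderOf_eq_orderOf_iff.2 fun n =>
    ⟨fun h => by rw [← pow_apply, h, one_apply], fun h => DFunLike.ext _ _ fun a => ?_⟩
  obtain ⟨k, hk⟩ := hgen a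
  rw [pow_apply, one_apply, hk, ← pow_mul, mul_comm, pow_mul, h, one_pow]

variable [Fintype G]

theorem image_eq_nthRootsFinset [DecidableEq R] (ψ : AddChar G R) :
    univ.image ψ = nthRootsFinset (orderOf ψ) (1 : R) := by
  obtain ⟨a₀, hζ⟩ := ψ.exists_isPrimitiveRoot_apply
  have : NeZero (orderOf ψ) := ⟨ψ.orderOf_pos.ne'⟩
  ext z
  rw [mem_image, mem_nthRootsFinset ψ.orderOf_pos]
  constructor
  · rintro ⟨a, -, rfl⟩
    rw [← pow_apply, pow_orderOf_eq_one, one_apply]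
  · intro hz
    obtain ⟨i, -, rfl⟩ := hζ.eq_pow_of_pow_eq_one hz
    exact ⟨i • a₀, mem_univ _, map_nsmul_eq_pow ψ i a₀⟩

theorem orderOf_mul_card_ker [DecidableEq R] (ψ : AddChar G R) :
    orderOf ψ * #{a | ψ a = 1} = Fintype.card G := by
  obtain ⟨a₀, hζ⟩ := ψ.exists_isPrimitiveRoot_apply
  rw [← card_univ, card_eq_sum_card_image ψ univ, sum_const_nat fun z hz => ?_,
    image_eq_nthRootsFinset, hζ.card_nthRootsFinset]
  obtain ⟨b, -, rfl⟩ := mem_image.1 hz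
  exact ψ.card_fiber_eq_card_ker b

theorem prod_apply_eq_pow {M : Type*} [CommMonoid M] (ψ : AddChar G R) (f : R → M) :
    ∏ a, f (ψ a) =
      (∏ z ∈ nthRootsFinset (orderOf ψ) (1 : R), f z) ^ (Fintype.card G / orderOf ψ) := by
  classical
  rw [Finset.prod_comp, ← image_eq_nthRootsFinset, ← ψ.orderOf_mul_card_ker,
    Nat.mul_div_cancel_left _ ψ.orderOf_pos, ← prod_pow]
  refine prod_congr rfl fun z hz => ?_
  obtain ⟨b, -, rfl⟩ := mem_image.1 hz
  rw [ψ.card_fiber_eq_card_ker b]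

end

theorem prod_one_add_apply {G R : Type*} [AddGroup G] [Fintype G] [CommRing R] [IsDomain R]
    (ψ : AddChar G R) :
    ∏ a, (1 + ψ a) = if Odd (orderOf ψ) then 2 ^ (Fintype.card G / orderOf ψ) else 0 := by
  obtain ⟨a₀, hζ⟩ := ψ.exists_isPrimitiveRoot_apply
  rw [ψ.prod_apply_eq_pow (1 + ·), hζ.prod_one_add_nthRootsFinset ψ.orderOf_pos]
  split_ifs with hodd
  · rw [hodd.neg_one_pow, sub_neg_eq_add, one_add_one_eq_two]
  · rw [(Nat.not_odd_iff_even.1 hodd).neg_one_pow, sub_self, zero_pow]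
    exact (Nat.div_pos (Nat.le_of_dvd Fintype.card_pos ψ.orderOf_dvd_card) ψ.orderOf_pos).ne'

theorem exists_equiv_addOrderOf_eq_orderOf (G M : Type*) [AddCommGroup G] [Finite G]
    [CommMonoid M] [HasEnoughRootsOfUnity M (Monoid.exponent (Multiplicative G))] :
    ∃ e : AddChar G M ≃ G, ∀ ψ, addOrderOf (e ψ) = orderOf ψ := by
  obtain ⟨e⟩ := CommGroup.monoidHom_mulEquiv_of_hasEnoughRootsOfUnity (Multiplicative G) M
  let E := toMonoidHomMulEquiv.trans (MonoidHom.toHomUnitsMulEquiv.trans e)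
  exact ⟨E.toEquiv.trans Multiplicative.toAdd, fun ψ => by
    rw [← orderOf_ofAdd_eq_addOrderOf]
    exact E.orderOf_eq ψ⟩

end AddChar

theorem sum_addOrderOf_eq_sum_divisors {G M : Type*} [AddGroup G] [Fintype G] [AddCommMonoid M]
    (f : ℕ → M) :
    ∑ g : G, f (addOrderOf g) =
      ∑ d ∈ (Fintype.card G).divisors, Nat.card {g : G // addOrderOf g = d} • f d := by
  classical
  rw [← sum_fiberwise_of_maps_to (t := (Fintype.card G).divisors) (g := addOrderOf)
    fun g _ => Nat.mem_divisors.2 ⟨addOrderOf_dvd_card, Fintype.card_ne_zero⟩]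
  refine sum_congr rfl fun d _ => ?_
  rw [sum_congr rfl fun g hg => by rw [(mem_filter.1 hg).2], sum_const, Nat.card_eq_fintype_card,
    Fintype.card_subtype]

/-- For a finite abelian group `G` of order `n`, if `N_G` is the number of subsets of `G`
summing to `0`, then `n·N_G = Σ_{d | n, d odd} φ_G(d)·2^{n/d}`, where `φ_G(d)` is the
number of elements of `G` of order exactly `d`. -/
theorem card_zero_sum_subsets (G : Type*) [AddCommGroup G] [Fintype G] [DecidableEq G] :
    Fintype.card G * Nat.card {S : Finset G // (∑ g ∈ S, g) = 0} =
    ∑ d ∈ (Fintype.card G).divisors.filter (fun d => Odd d),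
      Nat.card {g : G // addOrderOf g = d} * 2 ^ (Fintype.card G / d) := by
  set n := Fintype.card G
  let F : ℕ → ℕ := fun d => if Odd d then 2 ^ (n / d) else 0
  have hchar : ((n * Nat.card {S : Finset G // (∑ g ∈ S, g) = 0} : ℕ) : ℂ) =
      ∑ ψ : AddChar G ℂ, (F (orderOf ψ) : ℂ) := by
    calc _ = ∑ S : Finset G, ∑ ψ : AddChar G ℂ, ψ (∑ g ∈ S, g) := by
          simp_rw [AddChar.sum_apply_eq_ite]
          rw [← sum_filter, sum_const, nsmul_eq_mul, Nat.card_eq_fintype_card,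
            Fintype.card_subtype, Nat.cast_mul, mul_comm]
      _ = ∑ ψ : AddChar G ℂ, ∏ g, (1 + ψ g) := by
          rw [sum_comm]
          exact sum_congr rfl fun ψ _ => ψ.sum_apply_sum_eq_prod_one_add
      _ = ∑ ψ : AddChar G ℂ, (F (orderOf ψ) : ℂ) :=
          sum_congr rfl fun ψ _ => by rw [ψ.prod_one_add_apply]; push_cast [F]; rfl
  have : NeZero (Monoid.exponent (Multiplicative G)) := ⟨Monoid.exponent_ne_zero_of_finite⟩
  obtain ⟨e, he⟩ := AddChar.exists_equiv_addOrderOf_eq_orderOf G ℂ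
  rw [← Nat.cast_sum, Nat.cast_inj] at hchar
  simp_rw [hchar, ← he]
  rw [e.sum_comp (fun g => F (addOrderOf g)), sum_addOrderOf_eq_sum_divisors, sum_filter]
  exact sum_congr rfl fun d _ => by simp only [F, smul_eq_mul, mul_ite, mul_zero]
end

section
/- Let G be a finite abelian group, written additively, let π : G → G be a bijection, and let M be the multiset {g + π(g) : g ∈ G}. If a, b ∈ G are such that the element a + b belongs to M, then there exists a bijection σ : G → G with σ(a) = b and with the multiset {g + σ(g) : g ∈ G} equal to M. -/
/-!
Conjugating a map `f` by the translation `g ↦ g - d` gives `σ g = f (g - d) - d`, and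
`g + σ g = (g - d) + f (g - d)`, so `σ` produces the same multiset of sums as `f`. If
`g₀ + π g₀ = a + b`, the choice `d = a - g₀` moves the sum at `g₀` to position `a`, forcing `σ a = b`.
-/

open Finset

theorem map_add_conj_subRight {G : Type*} [AddCommGroup G] [Fintype G] (f : G → G) (d : G) :
    univ.val.map (fun g => g + (f (g - d) - d)) = univ.val.map (fun g => g + f g) := by
  have hcomp : (fun g => g + (f (g - d) - d)) = (fun g => g + f g) ∘ Equiv.subRight d := by
    funext g
    simp only [Function.comp_apply, Equiv.subRight_apply]
    abel
  rw [hcomp, ← Multiset.map_map, Multiset.map_univ_val_equiv]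

/-- Let `G` be a finite abelian group, `π` a bijection of `G`, and
`M = {g + π(g) : g ∈ G}` the associated multiset.  If `a + b ∈ M` for some `a, b ∈ G`,
then there is a bijection `σ` of `G` with `σ(a) = b` producing the same multiset `M`. -/
theorem exists_perm_with_prescribed_value (G : Type*) [AddCommGroup G] [Fintype G]
    (π : Equiv.Perm G) (a b : G)
    (h : a + b ∈ Multiset.map (fun g => g + π g) Finset.univ.val) :
    ∃ σ : Equiv.Perm G, σ a = b ∧
      Multiset.map (fun g => g + σ g) Finset.univ.val =
        Multiset.map (fun g => g + π g) Finset.univ.val := by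
  obtain ⟨g₀, -, hg₀⟩ := Multiset.mem_map.mp h
  let d := a - g₀
  refine ⟨(Equiv.subRight d).trans (π.trans (Equiv.subRight d)), ?_, map_add_conj_subRight π d⟩
  have hπ : π g₀ = a + b - g₀ := eq_sub_of_add_eq' hg₀
  simp only [Equiv.trans_apply, Equiv.subRight_apply, d, sub_sub_cancel, hπ]
  abel
end

section
/- Let G be a finite abelian group, written additively, of order n, and let M_G be the G×G matrix over the polynomial ring ℂ[x_g : g ∈ G] with (g,h) entry x_{g+h}. Let π₀ ∈ Perm(G) be the permutation g ↦ −g, with sign ε(π₀) ∈ {±1}. Then det(M_G) = ε(π₀) · ∏_{χ ∈ Ĝ} ( Σ_{g∈G} χ(g)·x_g ), where the product is over all n characters χ of G, i.e., all group homomorphisms χ : G → ℂˣ (values viewed in ℂ). In particular, det(M_G) is a product of n linear forms. -/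
open Finset MvPolynomial

/-!
The characters of `G` are simultaneous eigenvectors of every matrix `(g, h) ↦ f (g - h)`:
multiplying the matrix of characters by it only rescales the row of `χ` by `∑ g, χ g * f g`.
Over `ℂ` the `n` characters form a basis of `G → ℂ`, so the matrix of characters has a unit
determinant, which cancels. The Cayley table is this circulant matrix with its columns
permuted by `h ↦ -h`, which contributes the sign.
-/

namespace Matrix

variable {G : Type*} [AddCommGroup G] [Fintype G]

theorem diagonal_mul_of_addChar_eq_mul_circulant {ι R : Type*} [CommRing R] [Fintype ι]
    [DecidableEq ι] (f : G → R) (ψ : ι → AddChar G R) :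
    diagonal (fun i => ∑ g, ψ i g * f g) * of (fun i k => ψ i k) =
      of (fun i k => ψ i k) * circulant f := by
  ext i h
  rw [diagonal_mul, mul_apply]
  simp only [of_apply, circulant_apply]
  calc (∑ g, ψ i g * f g) * ψ i h = ∑ g, ψ i (g + h) * f g := by
        rw [sum_mul]
        refine sum_congr rfl fun g _ => ?_
        rw [AddChar.map_add_eq_mul]
        ring
    _ = ∑ k, ψ i k * f (k - h) := Fintype.sum_equiv (Equiv.addRight h) _ _ fun g => by simp

theorem isUnit_det_of_equiv_addChar [DecidableEq G] (e : G ≃ AddChar G ℂ) :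
    IsUnit (of fun i k : G => e i k).det := by
  have hbasis : (of fun i k : G => e i k)ᵀ =
      (Pi.basisFun ℂ G).toMatrix ((AddChar.complexBasis G).reindex e.symm) := by
    ext
    simp [Module.Basis.toMatrix_apply]
  rw [← det_transpose, hbasis]
  exact isUnit_det_of_left_inverse (Module.Basis.toMatrix_mul_toMatrix_flip _ _)

theorem det_circulant_eq_prod_addChar [DecidableEq G] {R : Type*} [CommRing R] [Algebra ℂ R]
    (f : G → R) :
    (circulant f).det = ∏ χ : AddChar G ℂ, ∑ g, algebraMap ℂ R (χ g) * f g := by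
  obtain ⟨e⟩ : Nonempty (G ≃ AddChar G ℂ) := ⟨Fintype.equivOfCardEq AddChar.card_eq.symm⟩
  have key := congrArg det <| diagonal_mul_of_addChar_eq_mul_circulant f
    fun i => (algebraMap ℂ R : ℂ →* R).compAddChar (e i)
  have hmap : of (fun i k => (algebraMap ℂ R : ℂ →* R).compAddChar (e i) k) =
      (of fun i k : G => e i k).map (algebraMap ℂ R) := rfl
  rw [det_mul, det_mul, hmap, ← RingHom.mapMatrix_apply, ← RingHom.map_det, det_diagonal, mul_comm] at key
  rw [← ((isUnit_det_of_equiv_addChar e).map (algebraMap ℂ R)).mul_left_cancel key]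
  exact Fintype.prod_equiv e _ _ fun i => rfl

end Matrix

/-- For a finite abelian group `G` of order `n`, the determinant of the Cayley table
(the `G×G` matrix over `ℂ[x_g : g ∈ G]` with `(g,h)` entry `x_{g+h}`) factors as the sign
of the permutation `g ↦ −g` times the product, over all `n` characters `χ : G → ℂˣ`
(formalised as additive characters `AddChar G ℂ`), of the linear forms `Σ_g χ(g)·x_g`. -/
theorem det_cayley_table_eq_prod_linear_forms
    (G : Type*) [AddCommGroup G] [Fintype G] [DecidableEq G] :
    Matrix.det (Matrix.of fun g h : G => (X (g + h) : MvPolynomial G ℂ)) =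
    ((Equiv.Perm.sign (Equiv.neg G) : ℤ) : MvPolynomial G ℂ) *
      ∏ χ : AddChar G ℂ, ∑ g : G, C (χ g) * X g := by
  have hcayley : Matrix.of (fun g h : G => (X (g + h) : MvPolynomial G ℂ)) =
      (Matrix.circulant X).submatrix id (Equiv.neg G) := by
    ext
    simp [Matrix.circulant_apply]
  rw [hcayley, Matrix.det_permute', Matrix.det_circulant_eq_prod_addChar, algebraMap_eq]
end
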